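/- arXiv:1702.07589 — 2 statements merged into one kernel-verified Lean document; each statement's English description precedes it below -/
import Mathlib

section
/- Let G be a map on an orientable surface of genus g, let D and D' be orientations of the primal-dual completion Ĝ with D a Schnyder orientation, and set T = D\D'. Then: (1) D' is a Schnyder orientation if and only if T is partitionable; (2) D' is a Schnyder orientation having the same outdegrees as D if and only if T is Eulerian-partitionable; (3) D' is a Schnyder orientation having the same outdegrees and the same type as D if and only if T is 0-homologous, i.e. D and D' are homologous. -/
/-
Common combinatorial framework.

Maps on compact orientable surfaces are formalized as rotation systems
(combinatorial maps): a finite set of darts together with a permutation `σ`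
(counterclockwise successor around each vertex) and a fixed-point-free
involution `α` (reversal of darts).  Vertices are the orbits of `σ`, edges the
orbits of `α`, and the (counterclockwise) facial walks are the orbits of
`σ⁻¹ * α`.  The genus is recovered from the Euler characteristic.

Homology of the map is formalized by flows: integer-valued functions on darts;
the subgroup generated by the facial flows plays the role of the boundary
subgroup, two flows being homologous when their difference belongs to it.
Contractibility is formalized combinatorially: null-homotopy of closed walks is
generated by insertion/deletion of spurs and of facial boundaries (and rotation
of the base point).

Schnyder woods are formalized by their angle labellings (corners ≃ darts, the
corner of dart `d` being the corner between `d` and `σ d` at the tail of `d`);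
this follows the paper, where (generalized) Schnyder woods are exactly the
EDGE, ℕ*-VERTEX, ℕ*-FACE angle labellings, and where around an edge `{d, α d}`
the four corners in clockwise order are `d, σ⁻¹ (α d), α d, σ⁻¹ d`.
-/

noncomputable section
open scoped Classical

namespace Schnyder

/-- The setoid whose classes are the orbits (cycles) of a permutation;
for the vertex rotation `σ` the classes are the vertices of the map, for the
edge involution `α` they are the edges, for the face permutation they are the
faces. -/
def permSetoid {X : Type*} (f : Equiv.Perm X) : Setoid X where
  r := f.SameCycle
  iseqv := ⟨fun x => ⟨0, by simp⟩, fun h => h.symm, fun h h' => h.trans h'⟩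

/-- The number of orbits of a permutation. -/
def numOrbits {X : Type*} (f : Equiv.Perm X) : ℕ :=
  Nat.card (Quotient (permSetoid f))

/-- `ccwSector σ x y d` : rotating counterclockwise (iterating `σ`) from the dart
`x`, the dart `d` is met strictly after `x` and before the first occurrence of
`y`; i.e. `d` lies in the counterclockwise sector from `x` to `y` (both
excluded). -/
def ccwSector {X : Type*} (σ : Equiv.Perm X) (x y d : X) : Prop :=
  ∃ k : ℕ, 0 < k ∧ (σ ^ k) x = d ∧ ∀ l : ℕ, 0 < l → l ≤ k → (σ ^ l) x ≠ y

def cyclicNext {n : ℕ} (h : 0 < n) (k : Fin n) : Fin n :=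
  ⟨((k : ℕ) + 1) % n, Nat.mod_lt _ h⟩

def cyclicPrev {n : ℕ} (h : 0 < n) (k : Fin n) : Fin n :=
  ⟨((k : ℕ) + (n - 1)) % n, Nat.mod_lt _ h⟩

/-- The face permutation: its orbits are the (counterclockwise) facial walks of
the map with vertex rotation `σ` and edge involution `α`. -/
def fperm {X : Type*} (σ α : Equiv.Perm X) : Equiv.Perm X := σ⁻¹ * α

/-- A closed walk in the map with vertex rotation `σ` and edge involution `α`:
a cyclic sequence of darts, consecutive darts being chained head-to-tail. -/
structure CWalk {X : Type*} (σ α : Equiv.Perm X) where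
  n : ℕ
  pos : 0 < n
  darts : Fin n → X
  chain : ∀ k : Fin n, σ.SameCycle (α (darts k)) (darts (cyclicNext pos k))

namespace CWalk

variable {X : Type*} {σ α : Equiv.Perm X}

/-- The characteristic flow of a closed walk. -/
def flow (W : CWalk σ α) : X → ℤ := fun d =>
  ∑ k : Fin W.n, ((if W.darts k = d then (1 : ℤ) else 0) - (if W.darts k = α d then 1 else 0))

/-- A closed walk is a cycle when it passes at most once through each vertex. -/
def IsCycle (W : CWalk σ α) : Prop :=
  ∀ k k' : Fin W.n, σ.SameCycle (W.darts k) (W.darts k') → k = k'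

def Mem (W : CWalk σ α) (d : X) : Prop := ∃ k, W.darts k = d

/-- Two closed walks intersect when they share a vertex. -/
def Intersects (W W' : CWalk σ α) : Prop :=
  ∃ k k', σ.SameCycle (W.darts k) (W'.darts k')

/-- `W'` is obtained from `W` by reversing all its edges. -/
def IsReversal (W W' : CWalk σ α) : Prop := ∀ d, W.Mem d ↔ W'.Mem (α d)

/-- Two closed walks use exactly the same darts. -/
def SameSupport (W W' : CWalk σ α) : Prop := ∀ d, W.Mem d ↔ W'.Mem d

/-- Edge-disjointness of two closed walks. -/
def EdgeDisjoint (W W' : CWalk σ α) : Prop :=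
  ∀ d, W.Mem d → ¬ W'.Mem d ∧ ¬ W'.Mem (α d)

/-- The list of darts of a closed walk. -/
def toList (W : CWalk σ α) : List X := List.ofFn W.darts

end CWalk

/-- Two (monochromatic) cycles cross when they intersect and are not reversal
of each other. -/
def CrossingCycles {X : Type*} {σ α : Equiv.Perm X} (W W' : CWalk σ α) : Prop :=
  W.Intersects W' ∧ ¬ W.IsReversal W'

/-- The characteristic flow of the counterclockwise facial walk of the face of
the dart `d0`. -/
def faceFlow {X : Type*} (σ α : Equiv.Perm X) (d0 : X) : X → ℤ := fun d =>
  (if (fperm σ α).SameCycle d0 d then (1 : ℤ) else 0)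
    - (if (fperm σ α).SameCycle d0 (α d) then 1 else 0)

/-- The subgroup `𝔽` of flows generated by the (counterclockwise) facial walks. -/
def facialSubgroup {X : Type*} (σ α : Equiv.Perm X) : AddSubgroup (X → ℤ) :=
  AddSubgroup.closure (Set.range (faceFlow σ α))

/-- Two flows are homologous when their difference belongs to `𝔽`. -/
def Homologous {X : Type*} (σ α : Equiv.Perm X) (f g : X → ℤ) : Prop :=
  f - g ∈ facialSubgroup σ α

/-- Two flows are reversely homologous when their sum belongs to `𝔽`. -/
def ReverselyHomologous {X : Type*} (σ α : Equiv.Perm X) (f g : X → ℤ) : Prop :=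
  f + g ∈ facialSubgroup σ α

/-- Two flows are weakly homologous when they are homologous or reversely
homologous. -/
def WeaklyHomologous {X : Type*} (σ α : Equiv.Perm X) (f g : X → ℤ) : Prop :=
  Homologous σ α f g ∨ ReverselyHomologous σ α f g

/-- Antisymmetric dart functions: the flows `ℤ^E` of the paper (with respect to
the reference orientation given by the darts). -/
def IsFlow {X : Type*} (α : Equiv.Perm X) (f : X → ℤ) : Prop := ∀ d, f (α d) = - f d

/-- A finite family of closed walks is a homology-basis when its classes
generate the first homology group: every closed walk equals, modulo the facial
subgroup, an integer combination of the family. -/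
def IsHomologyBasis {X : Type*} (σ α : Equiv.Perm X) {ι : Type*} [Fintype ι]
    (B : ι → CWalk σ α) : Prop :=
  ∀ W : CWalk σ α, ∃ μ : ι → ℤ, W.flow - ∑ i, μ i • (B i).flow ∈ facialSubgroup σ α

/-- `F` is the complete boundary list of one face (starting anywhere on it). -/
def IsFaceBoundary {X : Type*} (σ α : Equiv.Perm X) (F : List X) : Prop :=
  ∃ (d : X) (k : ℕ), 0 < k ∧ ((fperm σ α) ^ k) d = d ∧
    (∀ i : ℕ, 0 < i → i < k → ((fperm σ α) ^ i) d ≠ d) ∧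
    F = (List.range k).map fun i => ((fperm σ α) ^ i) d

/-- Elementary combinatorial homotopy moves on closed walks: deletion of a
spur, deletion of a facial boundary, rotation of the base point. -/
inductive HomotopyStep {X : Type*} (σ α : Equiv.Perm X) : List X → List X → Prop
  | spur (W₁ W₂ : List X) (d : X) : HomotopyStep σ α (W₁ ++ d :: α d :: W₂) (W₁ ++ W₂)
  | face (W₁ W₂ F : List X) (hF : IsFaceBoundary σ α F) :
      HomotopyStep σ α (W₁ ++ F ++ W₂) (W₁ ++ W₂)
  | rot (d : X) (W : List X) : HomotopyStep σ α (d :: W) (W ++ [d])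

/-- A closed walk (given by its dart list) is contractible when it is
null-homotopic. -/
def NullHomotopic {X : Type*} (σ α : Equiv.Perm X) (W : List X) : Prop :=
  Relation.EqvGen (HomotopyStep σ α) W []

/-! ### Schnyder angle labellings -/

/-- The EDGE pattern on the four corner labels in clockwise order around an
edge: either all four labels are equal (type 0 edge), or they are cyclically
`i-1, i, i, i+1` for some colour `i` (type 1 and type 2 edges). -/
def edgePattern (x : Fin 4 → ZMod 3) : Prop :=
  (∀ k, x k = x 0) ∨
    ∃ (i : ZMod 3) (j : Fin 4), x j = i - 1 ∧ x (j + 1) = i ∧ x (j + 2) = i ∧ x (j + 3) = i + 1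

/-- The EDGE condition at the edge `{d, α d}`: in clockwise order around the
edge, the four incident corners are `d, σ⁻¹ (α d), α d, σ⁻¹ d`. -/
def EdgeCond {X : Type*} (σ α : Equiv.Perm X) (lab : X → ZMod 3) (d : X) : Prop :=
  edgePattern ![lab d, lab (σ⁻¹ (α d)), lab (α d), lab (σ⁻¹ d)]

/-- An EDGE angle labelling (= Schnyder labelling). -/
def IsSchnyderLabeling {X : Type*} (σ α : Equiv.Perm X) (lab : X → ZMod 3) : Prop :=
  ∀ d, EdgeCond σ α lab d

/-- ℕ*-VERTEX (in presence of the EDGE condition): no vertex has all its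
corners of the same colour. -/
def VertexNonconstant {X : Type*} (σ : Equiv.Perm X) (lab : X → ZMod 3) : Prop :=
  ∀ d, ∃ d', σ.SameCycle d d' ∧ lab d' ≠ lab d

/-- ℕ*-FACE (in presence of the EDGE condition): no face has all its corners of
the same colour. -/
def FaceNonconstant {X : Type*} (σ α : Equiv.Perm X) (lab : X → ZMod 3) : Prop :=
  ∀ d, ∃ d', (fperm σ α).SameCycle d d' ∧ lab d' ≠ lab d

/-- A (generalized) Schnyder wood, presented by its angle labelling: an EDGE,
ℕ*-VERTEX, ℕ*-FACE angle labelling (on the torus this is exactly a toroidal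
Schnyder wood). -/
def IsSchnyderWood {X : Type*} (σ α : Equiv.Perm X) (lab : X → ZMod 3) : Prop :=
  IsSchnyderLabeling σ α lab ∧ VertexNonconstant σ lab ∧ FaceNonconstant σ α lab

/-- The dart `d` carries the outgoing direction of colour `i` of its edge:
its two adjacent corners at its tail are labelled `i - 1` (counterclockwise
side) and `i + 1` (clockwise side). -/
def OutDart {X : Type*} (σ : Equiv.Perm X) (lab : X → ZMod 3) (i : ZMod 3) (d : X) : Prop :=
  lab d = i - 1 ∧ lab (σ⁻¹ d) = i + 1

/-- A monochromatic cycle of colour `i` (an `i`-cycle): a directed cycle all of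
whose darts are outgoing of colour `i`. -/
def IsMonoCycle {X : Type*} (σ α : Equiv.Perm X) (lab : X → ZMod 3) (i : ZMod 3)
    (C : CWalk σ α) : Prop :=
  C.IsCycle ∧ ∀ k, OutDart σ lab i (C.darts k)

/-- Half-crossing Schnyder wood: some pair of monochromatic cycles of different
colours cross. -/
def HalfCrossingSW {X : Type*} (σ α : Equiv.Perm X) (lab : X → ZMod 3) : Prop :=
  ∃ (i j : ZMod 3) (C C' : CWalk σ α), i ≠ j ∧ IsMonoCycle σ α lab i C ∧
    IsMonoCycle σ α lab j C' ∧ CrossingCycles C C'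

/-- `i`-crossing Schnyder wood: every `i`-cycle crosses every monochromatic
cycle of any other colour. -/
def ICrossingSW {X : Type*} (σ α : Equiv.Perm X) (lab : X → ZMod 3) (i : ZMod 3) : Prop :=
  ∀ (j : ZMod 3) (C C' : CWalk σ α), j ≠ i → IsMonoCycle σ α lab i C →
    IsMonoCycle σ α lab j C' → CrossingCycles C C'

/-- Intersecting Schnyder wood. -/
def IntersectingSW {X : Type*} (σ α : Equiv.Perm X) (lab : X → ZMod 3) : Prop :=
  ∀ (i : ZMod 3) (C : CWalk σ α), IsMonoCycle σ α lab i C →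
    (∃ C', IsMonoCycle σ α lab (i - 1) C' ∧ C.Intersects C') ∧
    (∃ C', IsMonoCycle σ α lab (i + 1) C' ∧ C.Intersects C')

/-- Crossing Schnyder wood. -/
def CrossingSW {X : Type*} (σ α : Equiv.Perm X) (lab : X → ZMod 3) : Prop :=
  ∀ (i : ZMod 3) (C : CWalk σ α), IsMonoCycle σ α lab i C →
    (∃ C', IsMonoCycle σ α lab (i - 1) C' ∧ CrossingCycles C C') ∧
    (∃ C', IsMonoCycle σ α lab (i + 1) C' ∧ CrossingCycles C C')

/-! ### Combinatorial maps -/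

/-- A map on a compact orientable surface, as a rotation system: finitely many
darts, vertex rotation `σ` (counterclockwise), fixed-point-free edge involution
`α`; connectedness makes the embedding cellular. -/
structure CombMap where
  D : Type
  fin : Fintype D
  σ : Equiv.Perm D
  α : Equiv.Perm D
  α_invol : ∀ d, α (α d) = d
  α_fixfree : ∀ d, α d ≠ d
  connected : ∀ d d', Relation.EqvGen (fun a b => b = σ a ∨ b = α a) d d'

attribute [instance] CombMap.fin

namespace CombMap

variable (M : CombMap)

def facePerm : Equiv.Perm M.D := fperm M.σ M.α

abbrev SameVertex (d d' : M.D) : Prop := M.σ.SameCycle d d'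

abbrev SameFace (d d' : M.D) : Prop := M.facePerm.SameCycle d d'

/-- Closed walks of the (primal) map. -/
abbrev ClosedWalk := CWalk M.σ M.α

/-- Closed walks of the dual map (dual vertices = faces of `M`). -/
abbrev DualClosedWalk := CWalk M.facePerm M.α

/-- Euler characteristic `V - E + F`; it equals `2 - 2g` where `g` is the genus
of the surface. -/
def eulerChar : ℤ :=
  (numOrbits M.σ : ℤ) - (numOrbits M.α : ℤ) + (numOrbits M.facePerm : ℤ)

/-- A closed walk is `0`-homologous; on the torus a cycle is contractible if
and only if its flow is `0`-homologous. -/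
def FlowContractible (W : M.ClosedWalk) : Prop := W.flow ∈ facialSubgroup M.σ M.α

/-- No contractible loop. -/
def NoContractibleLoop : Prop :=
  ∀ d : M.D, M.SameVertex d (M.α d) → ¬ NullHomotopic M.σ M.α [d]

/-- No homotopic multiple edges: two parallel edges never bound a disk. -/
def NoHomotopicMultiEdges : Prop :=
  ∀ d d' : M.D, M.SameVertex d d' → M.SameVertex (M.α d) (M.α d') →
    NullHomotopic M.σ M.α [d, M.α d'] → d' = d ∨ d' = M.α d

/-- A toroidal map: a map on the torus (Euler characteristic 0) without
contractible loop nor homotopic multiple edges. -/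
def IsToroidal : Prop := M.eulerChar = 0 ∧ M.NoContractibleLoop ∧ M.NoHomotopicMultiEdges

/-- A triangulation: every face has size three. -/
def IsTriangulation : Prop := ∀ d, (M.facePerm ^ 3) d = d ∧ M.facePerm d ≠ d

/-- A simple map: no loops and no multiple edges. -/
def Simple : Prop :=
  (∀ d : M.D, ¬ M.SameVertex d (M.α d)) ∧
    ∀ d d' : M.D, M.SameVertex d d' → M.SameVertex (M.α d) (M.α d') → d' = d ∨ d' = M.α d

/-- The pairing between a flow of `M` and a flow of its dual (the dual dart of
a dart being itself); this is twice the `β` of the paper, which is harmless. -/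
def beta (p q : M.D → ℤ) : ℤ := ∑ d : M.D, p d * q d

/-- The characteristic flow of an oriented subgraph given by a set of darts. -/
def setFlow (S : Set M.D) : M.D → ℤ := fun d =>
  (if d ∈ S then (1 : ℤ) else 0) - (if M.α d ∈ S then 1 else 0)

/-- The darts that are outgoing (in some colour) in a Schnyder wood: the
orientation of the map associated with the Schnyder wood. -/
def outSet (lab : M.D → ZMod 3) : Set M.D := {d | ∃ i, OutDart M.σ lab i d}

/-- The angle labelling of the dual Schnyder wood (the corner of the dual dart
`d` is the corner of `M` labelled by `facePerm d`). -/
def dualLab (lab : M.D → ZMod 3) : M.D → ZMod 3 := fun d => lab (M.facePerm d)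

/-! #### The primal–dual completion `Ĝ` and its orientations

The edges of `Ĝ` are indexed by `M.D × Bool` : `(d, false)` joins the tail
vertex of `d` to the edge-vertex of the edge of `d`, and `(d, true)` joins the
face on the left of `d` to this edge-vertex.  An orientation of `Ĝ` assigns
`true` to an edge when it is oriented from the primal/dual vertex towards the
edge-vertex (an "out-edge"). -/

/-- The orientation of `Ĝ` associated with an angle labelling: an edge of `Ĝ`
is an out-edge exactly when, crossing it counterclockwise around its
primal/dual vertex, the corner label increases by one. -/
def labOrientation (lab : M.D → ZMod 3) : M.D × Bool → Bool := fun x =>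
  if x.2 = false then (if lab x.1 = lab (M.σ⁻¹ x.1) + 1 then true else false)
  else (if lab (M.facePerm x.1) = lab x.1 + 1 then true else false)

/-- A Schnyder orientation of `Ĝ`: an orientation corresponding to a Schnyder
(EDGE) labelling of `M`. -/
def IsSchnyderOrientation (o : M.D × Bool → Bool) : Prop :=
  ∃ lab : M.D → ZMod 3, IsSchnyderLabeling M.σ M.α lab ∧ o = M.labOrientation lab

def outdegPrimal (o : M.D × Bool → Bool) (d0 : M.D) : ℕ :=
  Nat.card {d : M.D // M.SameVertex d0 d ∧ o (d, false) = true}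

def outdegDual (o : M.D × Bool → Bool) (d0 : M.D) : ℕ :=
  Nat.card {d : M.D // M.SameFace d0 d ∧ o (d, true) = true}

def outdegEdge (o : M.D × Bool → Bool) (d0 : M.D) : ℕ :=
  (if o (d0, false) = false then 1 else 0) + (if o (M.α d0, false) = false then 1 else 0) +
    (if o (d0, true) = false then 1 else 0) + (if o (M.α d0, true) = false then 1 else 0)

/-- A `mod₃`-orientation of `Ĝ`: primal- and dual-vertices have outdegree
divisible by 3, edge-vertices have outdegree `1 mod 3`. -/
def IsMod3Orientation (o : M.D × Bool → Bool) : Prop :=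
  (∀ d0, 3 ∣ M.outdegPrimal o d0) ∧ (∀ d0, 3 ∣ M.outdegDual o d0) ∧
    ∀ d0, M.outdegEdge o d0 % 3 = 1

/-- `γ(C)` for a cycle `C` of `M`: the number of edges of `Ĝ` leaving `Ĉ` on
its right minus the number of edges of `Ĝ` leaving `Ĉ` on its left. -/
def gammaPDC (o : M.D × Bool → Bool) (C : M.ClosedWalk) : ℤ :=
  (∑ k : Fin C.n, ∑ d : M.D,
      ((if ccwSector M.σ (M.α (C.darts (cyclicPrev C.pos k))) (C.darts k) d ∧
            o (d, false) = true then (1 : ℤ) else 0) -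
        (if ccwSector M.σ (C.darts k) (M.α (C.darts (cyclicPrev C.pos k))) d ∧
            o (d, false) = true then 1 else 0))) +
    ∑ k : Fin C.n,
      ((if o (M.α (C.darts k), true) = false then (1 : ℤ) else 0) -
        (if o (C.darts k, true) = false then 1 else 0))

/-- A Schnyder wood is balanced when `γ(C) = 0` for every non-contractible
cycle `C` of the map. -/
def BalancedLab (lab : M.D → ZMod 3) : Prop :=
  ∀ C : M.ClosedWalk, C.IsCycle → ¬ M.FlowContractible C →
    M.gammaPDC (M.labOrientation lab) C = 0

/-- `γ(C)` with respect to an orientation of the edges of `M` itself (the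
simplified form of `γ` for triangulations): number of edges of `M` leaving `C`
on its right minus the number leaving `C` on its left. -/
def gammaSet (A : Set M.D) (C : M.ClosedWalk) : ℤ :=
  ∑ k : Fin C.n, ∑ d : M.D,
    ((if ccwSector M.σ (M.α (C.darts (cyclicPrev C.pos k))) (C.darts k) d ∧ d ∈ A
        then (1 : ℤ) else 0) -
      (if ccwSector M.σ (C.darts k) (M.α (C.darts (cyclicPrev C.pos k))) d ∧ d ∈ A
        then 1 else 0))

/-- Balanced Schnyder wood of a toroidal triangulation (via the simplified
`γ` on the edges of `M`). -/
def BalancedTri (lab : M.D → ZMod 3) : Prop :=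
  ∀ C : M.ClosedWalk, C.IsCycle → ¬ M.FlowContractible C →
    M.gammaSet (M.outSet lab) C = 0

/-! #### Orientations of the map itself -/

/-- An orientation of the edges of `M` (one dart chosen per edge). -/
def IsOrientation (A : Set M.D) : Prop := ∀ d, d ∈ A ↔ M.α d ∉ A

/-- The characteristic flow of `D \ D'` for two orientations `A, A'`. -/
def orientDiffFlow (A A' : Set M.D) : M.D → ℤ := fun d =>
  if d ∈ A ∧ d ∉ A' then 1 else if d ∉ A ∧ d ∈ A' then -1 else 0

/-- A `0`-homologous flow is counterclockwise with respect to the face `f0`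
(given by one of its darts) when it is a combination with nonnegative
coefficients of the facial flows of the faces different from `f0`. -/
def CCWFlow (f0 : M.D) (t : M.D → ℤ) : Prop :=
  ∃ c : M.D → ℕ, (∀ d, M.SameFace d f0 → c d = 0) ∧
    t = ∑ d : M.D, (c d : ℤ) • faceFlow M.σ M.α d

def outAt (A : Set M.D) (d0 : M.D) : ℕ :=
  Nat.card {d : M.D // M.SameVertex d0 d ∧ d ∈ A}

/-- A 3-orientation: every vertex has outdegree exactly 3. -/
def IsThreeOrientation (A : Set M.D) : Prop :=
  M.IsOrientation A ∧ ∀ d0, M.outAt A d0 = 3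

/-! #### Middle walks and middle cycles -/

/-- In a 3-orientation `A`, `b` is the middle outgoing edge after `d`: it
leaves the head of `d`, with exactly one outgoing dart strictly on each side of
the path `d, b`. -/
def IsMiddleSucc (A : Set M.D) (d b : M.D) : Prop :=
  b ∈ A ∧ M.σ.SameCycle (M.α d) b ∧
    Nat.card {x : M.D // x ∈ A ∧ ccwSector M.σ (M.α d) b x} = 1 ∧
    Nat.card {x : M.D // x ∈ A ∧ ccwSector M.σ b (M.α d) x} = 1

/-- The middle walk: an infinite sequence of darts, each followed by the middle
outgoing edge at its head. -/
def IsMiddleWalk (A : Set M.D) (w : ℕ → M.D) : Prop :=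
  w 0 ∈ A ∧ ∀ n, M.IsMiddleSucc A (w n) (w (n + 1))

/-- A middle cycle: a directed cycle such that every vertex on it has exactly
one edge leaving on the left of the cycle (and hence exactly one on the
right). -/
def IsMiddleCycle (A : Set M.D) (C : M.ClosedWalk) : Prop :=
  C.IsCycle ∧ (∀ k, C.darts k ∈ A) ∧
    ∀ k, Nat.card {x : M.D // x ∈ A ∧
        ccwSector M.σ (C.darts (cyclicNext C.pos k)) (M.α (C.darts k)) x} = 1 ∧
      Nat.card {x : M.D // x ∈ A ∧
        ccwSector M.σ (M.α (C.darts k)) (C.darts (cyclicNext C.pos k)) x} = 1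

end CombMap

/-! ### Universal covers -/

/-- A universal cover of the map `M`: a connected, simply connected covering of
(maps given by) rotation systems.  `p` commutes with the rotations, is a local
bijection on vertices, the cover is connected, and every closed walk of the
cover is null-homotopic (simple connectivity). -/
structure UniversalCover (M : CombMap) where
  Dc : Type
  σ' : Equiv.Perm Dc
  α' : Equiv.Perm Dc
  α'_invol : ∀ x, α' (α' x) = x
  p : Dc → M.D
  p_surj : Function.Surjective p
  p_σ : ∀ x, p (σ' x) = M.σ (p x)
  p_α : ∀ x, p (α' x) = M.α (p x)
  locInj : ∀ x y, σ'.SameCycle x y → p x = p y → x = y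
  connected : ∀ x y, Relation.EqvGen (fun a b => b = σ' a ∨ b = α' a) x y
  simplyConnected : ∀ W : CWalk σ' α', NullHomotopic σ' α' W.toList

/-- A set of darts closed under the vertex rotation: a set of vertices. -/
def VertexClosed {X : Type*} (σ : Equiv.Perm X) (A : Set X) : Prop :=
  ∀ x y, σ.SameCycle x y → (x ∈ A ↔ y ∈ A)

/-- The set of darts meets at most two vertices. -/
def AtMostTwoVertexClasses {X : Type*} (σ : Equiv.Perm X) (A : Set X) : Prop :=
  ∃ a b : X, ∀ x ∈ A, σ.SameCycle x a ∨ σ.SameCycle x b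

/-- Reachability in the graph of the map avoiding the vertices of `A`. -/
def ReachAvoiding {X : Type*} (σ α : Equiv.Perm X) (A : Set X) : X → X → Prop :=
  Relation.EqvGen fun u v => u ∉ A ∧ v ∉ A ∧ (v = σ u ∨ v = α u)

/-- 3-connectivity of the graph of a (possibly infinite) rotation system: at
least four vertices, and removing any (at most) two vertices leaves it
connected. -/
def ThreeConnectedMap {X : Type*} (σ α : Equiv.Perm X) : Prop :=
  (∃ a b c d : X, ¬σ.SameCycle a b ∧ ¬σ.SameCycle a c ∧ ¬σ.SameCycle a d ∧
      ¬σ.SameCycle b c ∧ ¬σ.SameCycle b d ∧ ¬σ.SameCycle c d) ∧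
    ∀ A : Set X, VertexClosed σ A → AtMostTwoVertexClasses σ A →
      ∀ x y, x ∉ A → y ∉ A → ReachAvoiding σ α A x y

/-- A map is essentially 3-connected when its universal cover is 3-connected. -/
def CombMap.EssentiallyThreeConnected (M : CombMap) : Prop :=
  ∀ U : UniversalCover M, ThreeConnectedMap U.σ' U.α'

/-! ### Miscellaneous helpers -/

/-- The order relation of a distributive lattice structure. -/
def distribLE {T : Type*} (inst : DistribLattice T) : T → T → Prop :=
  (inst.toLattice.toSemilatticeSup.toPartialOrder.toPreorder.toLE).le

/-- The strict order relation of a linear order structure. -/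
def linLT {T : Type*} (L : LinearOrder T) : T → T → Prop :=
  (L.toPartialOrder.toPreorder.toLT).lt

/-- A basic toroidal map: a non-contractible cycle on `n + 1` vertices together
with `n + 1` homologous non-contractible loops, one at each vertex.  Around the
vertex `x`, the counterclockwise order of the darts is: `(x,0)` towards the
next vertex on the cycle, `(x,1)` the loop leaving, `(x,2)` towards the
previous vertex, `(x,3)` the loop returning. -/
def CombMap.IsBasic (M : CombMap) : Prop :=
  ∃ (n : ℕ) (e : M.D ≃ ZMod (n + 1) × Fin 4),
    (∀ (x : ZMod (n + 1)) (j : Fin 4), e (M.σ (e.symm (x, j))) = (x, j + 1)) ∧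
      ∀ x : ZMod (n + 1),
        e (M.α (e.symm (x, 0))) = (x + 1, 2) ∧
        e (M.α (e.symm (x, 2))) = (x - 1, 0) ∧
        e (M.α (e.symm (x, 1))) = (x, 3) ∧
        e (M.α (e.symm (x, 3))) = (x, 1)

/-- The facial flows of the primal–dual completion `Ĝ` : the face of `Ĝ`
corresponding to the corner of dart `d0` is the quadrangle with boundary edges
`(d0,false)`, `(σ d0, false)`, `(d0,true)`, `(α (σ d0), true)`, traversed
counterclockwise. -/
def CombMap.pdcFaceFlow (M : CombMap) (d0 : M.D) : M.D × Bool → ℤ := fun x =>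
  (if x = (d0, false) then (1 : ℤ) else 0) - (if x = (M.σ d0, false) then 1 else 0)
    - (if x = (d0, true) then 1 else 0) + (if x = (M.α (M.σ d0), true) then 1 else 0)

def CombMap.pdcFacialSubgroup (M : CombMap) : AddSubgroup (M.D × Bool → ℤ) :=
  AddSubgroup.closure (Set.range M.pdcFaceFlow)

/-- The characteristic flow of `T = D \ D'` for two orientations of `Ĝ`
(reference orientation of the edges of `Ĝ` : towards the edge-vertex). -/
def CombMap.pdcDiff (M : CombMap) (o o' : M.D × Bool → Bool) : M.D × Bool → ℤ := fun x =>
  if o x = o' x then 0 else if o x = true then 1 else -1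

def restrictFlow {Y : Type*} (t : Y → ℤ) (S : Set Y) : Y → ℤ := fun x =>
  if x ∈ S then t x else 0

/-- An (oriented sub)flow of `Ĝ` is Eulerian: balanced at every primal-,
dual- and edge-vertex. -/
def CombMap.PDCEulerian (M : CombMap) (t : M.D × Bool → ℤ) : Prop :=
  (∀ d0 : M.D, (∑ d : M.D, if M.SameVertex d0 d then t (d, false) else 0) = 0) ∧
    (∀ d0 : M.D, (∑ d : M.D, if M.SameFace d0 d then t (d, true) else 0) = 0) ∧
    ∀ d : M.D, t (d, false) + t (M.α d, false) + t (d, true) + t (M.α d, true) = 0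

/-- `t` is partitionable: its support splits into three pairwise homologous
oriented subgraphs. -/
def CombMap.PDCPartitionable (M : CombMap) (t : M.D × Bool → ℤ) : Prop :=
  ∃ S0 S1 S2 : Set (M.D × Bool),
    (∀ x, t x ≠ 0 ↔ x ∈ S0 ∪ S1 ∪ S2) ∧
    Disjoint S0 S1 ∧ Disjoint S0 S2 ∧ Disjoint S1 S2 ∧
    restrictFlow t S0 - restrictFlow t S1 ∈ M.pdcFacialSubgroup ∧
    restrictFlow t S0 - restrictFlow t S2 ∈ M.pdcFacialSubgroup ∧
    restrictFlow t S1 - restrictFlow t S2 ∈ M.pdcFacialSubgroup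

/-- `t` is Eulerian-partitionable: as above, with the three parts moreover
Eulerian. -/
def CombMap.PDCEulerianPartitionable (M : CombMap) (t : M.D × Bool → ℤ) : Prop :=
  ∃ S0 S1 S2 : Set (M.D × Bool),
    (∀ x, t x ≠ 0 ↔ x ∈ S0 ∪ S1 ∪ S2) ∧
    Disjoint S0 S1 ∧ Disjoint S0 S2 ∧ Disjoint S1 S2 ∧
    restrictFlow t S0 - restrictFlow t S1 ∈ M.pdcFacialSubgroup ∧
    restrictFlow t S0 - restrictFlow t S2 ∈ M.pdcFacialSubgroup ∧
    restrictFlow t S1 - restrictFlow t S2 ∈ M.pdcFacialSubgroup ∧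
    M.PDCEulerian (restrictFlow t S0) ∧ M.PDCEulerian (restrictFlow t S1) ∧
    M.PDCEulerian (restrictFlow t S2)

/-- Two orientations of `Ĝ` have the same outdegrees. -/
def CombMap.SameOutdegrees (M : CombMap) (o o' : M.D × Bool → Bool) : Prop :=
  (∀ d0, M.outdegPrimal o d0 = M.outdegPrimal o' d0) ∧
    (∀ d0, M.outdegDual o d0 = M.outdegDual o' d0) ∧
    ∀ d0, M.outdegEdge o d0 = M.outdegEdge o' d0

/-!
Record an orientation of `Ĝ` by the `0/1` indicator of its out-edges, so that `T = D \ D'` is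
the difference of two indicators. The faces of `Ĝ` are the corners of the map, and the facial
subgroup is the image of the coboundary map `cob` on integer functions of the corners. An angle
labelling is Schnyder exactly when its coboundary is `0` or `1` on every edge of `Ĝ`, the
orientation recording where it is `1`; hence `D'` is Schnyder iff `T ≡ cob δ (mod 3)` for some
`δ`, the difference of the two labellings.

(1) Such a `T` splits into three colour classes whose consecutive differences are coboundaries
of indicator functions; conversely, if `T = T₀ + T₁ + T₂` with homologous parts, then
`3 T₀ - T` is a coboundary, so `T ≡ cob δ (mod 3)`.
(2) Equal outdegrees means that `T` is Eulerian. Since `3 Tᵢ - T` is a coboundary and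
coboundaries are Eulerian, every part of a partition of an Eulerian `T` is Eulerian.
(3) `γ(C)` is linear in the out-edge indicator and vanishes on coboundaries. Conversely, an
Eulerian `T` is, up to a coboundary, a flow `τ` of the dual map; along the homology basis `γ`
computes twice the sums of `τ`, so these vanish along every closed walk, and `τ` is then the
coboundary of a potential on the vertices.
-/

end Schnyder

namespace Equiv.Perm

open Function

variable {X G : Type*}

theorem pow_eq_pow_of_lt_minimalPeriod {π : Perm X} {x : X} {m n : ℕ}
    (hm : m < minimalPeriod π x) (hn : n < minimalPeriod π x) (h : (π ^ m) x = (π ^ n) x) :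
    m = n :=
  iterate_injOn_Iio_minimalPeriod hm hn (by simpa only [coe_pow] using h)

variable [Fintype X] [AddCommGroup G]

theorem SameCycle.exists_lt_minimalPeriod_pow_eq {π : Perm X} {x y : X} (h : π.SameCycle x y) :
    ∃ n < minimalPeriod π x, (π ^ n) x = y := by
  obtain ⟨i, rfl⟩ := h.exists_nat_pow_eq
  exact ⟨i % minimalPeriod π x,
    Nat.mod_lt _ (minimalPeriod_pos_of_mem_periodicPts (π.injective.mem_periodicPts x)),
    by simp only [coe_pow, iterate_mod_minimalPeriod_eq]⟩

theorem sum_sameCycle_eq_sum_range_minimalPeriod (π : Perm X) (f : X → G) (x : X) :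
    ∑ y with π.SameCycle x y, f y = ∑ j ∈ Finset.range (minimalPeriod π x), f ((π ^ j) x) := by
  have horbit : Finset.univ.filter (π.SameCycle x) =
      (Finset.range (minimalPeriod π x)).image fun j => (π ^ j) x := by
    ext y
    simp only [Finset.mem_filter, Finset.mem_univ, true_and, Finset.mem_image, Finset.mem_range]
    exact ⟨fun h => h.exists_lt_minimalPeriod_pow_eq,
      fun ⟨j, _, hj⟩ => hj ▸ sameCycle_pow_right.2 (SameCycle.refl _ _)⟩
  rw [horbit, Finset.sum_image fun m hm n hn h =>
    pow_eq_pow_of_lt_minimalPeriod (Finset.mem_range.1 hm) (Finset.mem_range.1 hn) h]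

/-- The potential is the partial sum of `f` along each cycle, starting from a base point of the
cycle. -/
theorem exists_sub_inv_eq_of_sum_sameCycle_eq_zero (π : Perm X) (f : X → G)
    (hf : ∀ x, ∑ y with π.SameCycle x y, f y = 0) :
    ∃ s : X → G, ∀ x, s x - s (π⁻¹ x) = f x := by
  let b : X → X := fun x => (Quotient.mk (SameCycle.setoid π) x).out
  have hb : ∀ x, π.SameCycle (b x) x := fun x => Quotient.mk_out (s := SameCycle.setoid π) x
  have hb_inv : ∀ x, b (π⁻¹ x) = b x := fun x =>
    congrArg Quotient.out (Quotient.sound (show π.SameCycle (π⁻¹ x) x from ⟨1, by simp⟩))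
  have hp : ∀ x, 0 < minimalPeriod π (b x) := fun x =>
    minimalPeriod_pos_of_mem_periodicPts (π.injective.mem_periodicPts _)
  choose k hk_lt hk_eq using fun x => (hb x).exists_lt_minimalPeriod_pow_eq
  have hk_prev : ∀ x n, n < minimalPeriod π (b x) → (π ^ (n + 1)) (b x) = x → k (π⁻¹ x) = n := by
    intro x n hn h
    refine pow_eq_pow_of_lt_minimalPeriod (hk_lt _) (by rw [hb_inv]; exact hn) ?_
    rw [hk_eq, hb_inv, Perm.inv_eq_iff_eq, ← mul_apply, ← pow_succ']
    exact h.symm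
  refine ⟨fun x => ∑ j ∈ Finset.range (k x + 1), f ((π ^ j) (b x)), fun x => ?_⟩
  simp only [hb_inv]
  by_cases hx : b x = x
  · have hk0 : k x = 0 :=
      pow_eq_pow_of_lt_minimalPeriod (hk_lt x) (hp x) (by rw [hk_eq, pow_zero, one_apply, hx])
    have hk_last : k (π⁻¹ x) = minimalPeriod π (b x) - 1 :=
      hk_prev x _ (Nat.sub_lt (hp x) one_pos) (by
        rw [Nat.sub_add_cancel (hp x), coe_pow, iterate_minimalPeriod, hx])
    rw [hk0, hk_last, Nat.sub_add_cancel (hp x), ← sum_sameCycle_eq_sum_range_minimalPeriod, hf]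
    simp [hx]
  · have hk_pos : 0 < k x := Nat.pos_of_ne_zero fun h => hx (by simpa [h] using hk_eq x)
    have hk_pred : k (π⁻¹ x) = k x - 1 := hk_prev x _ (by have := hk_lt x; omega) (by
      rw [Nat.sub_add_cancel hk_pos, hk_eq])
    rw [hk_pred, Nat.sub_add_cancel hk_pos, Finset.sum_range_succ, hk_eq]
    abel

theorem sum_sameCycle_apply (π : Perm X) (f : X → G) (x : X) :
    ∑ y with π.SameCycle x y, f (π y) = ∑ y with π.SameCycle x y, f y :=
  Finset.sum_equiv π (by simp [sameCycle_apply_right]) (by simp)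

theorem sum_sameCycle_inv_apply (π : Perm X) (f : X → G) (x : X) :
    ∑ y with π.SameCycle x y, f (π⁻¹ y) = ∑ y with π.SameCycle x y, f y := by
  simpa only [sameCycle_inv] using sum_sameCycle_apply π⁻¹ f x

end Equiv.Perm

namespace Schnyder

theorem sum_ccwSector_sub {X G : Type*} [Fintype X] [AddCommGroup G] {π : Equiv.Perm X}
    {x y : X} (hxy : π.SameCycle x y) (f : X → G) :
    ∑ d with ccwSector π x y d, (f d - f (π⁻¹ d)) = f (π⁻¹ y) - f x := by
  have hex : ∃ m, 0 < m ∧ (π ^ m) x = y :=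
    let ⟨m, hm, _, h⟩ := hxy.exists_pow_eq''
    ⟨m, hm, h⟩
  obtain ⟨hm, hmy⟩ := Nat.find_spec hex
  set m := Nat.find hex
  have hsector : Finset.univ.filter (ccwSector π x y) =
      (Finset.Ico 1 m).image fun j => (π ^ j) x := by
    ext d
    simp only [ccwSector, Finset.mem_filter, Finset.mem_univ, true_and, Finset.mem_image,
      Finset.mem_Ico]
    constructor
    · rintro ⟨j, hj, rfl, hjy⟩
      exact ⟨j, ⟨hj, lt_of_not_ge fun hmj => hjy m hm hmj hmy⟩, rfl⟩
    · rintro ⟨j, ⟨hj, hjm⟩, rfl⟩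
      exact ⟨j, hj, rfl, fun l hl hlj hly => Nat.find_min hex (by omega : l < m) ⟨hl, hly⟩⟩
  have hm_le : m ≤ Function.minimalPeriod π x := by
    by_contra! hlt
    have hp := Function.minimalPeriod_pos_of_mem_periodicPts (π.injective.mem_periodicPts x)
    refine Nat.find_min hex (by omega : m - Function.minimalPeriod π x < m) ⟨by omega, ?_⟩
    rw [← hmy, Equiv.Perm.coe_pow, Equiv.Perm.coe_pow,
      ← Function.iterate_add_minimalPeriod_eq, Nat.sub_add_cancel hlt.le]
  rw [hsector, Finset.sum_image fun i hi j hj h =>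
    Equiv.Perm.pow_eq_pow_of_lt_minimalPeriod (by simp at hi; omega) (by simp at hj; omega) h,
    Finset.sum_Ico_eq_sum_range]
  have hstep : ∀ j, π⁻¹ ((π ^ (j + 1)) x) = (π ^ j) x := fun j => by simp [pow_succ']
  simp only [add_comm 1, hstep]
  rw [Finset.sum_range_sub (fun j => f ((π ^ j) x)), ← hstep (m - 1), Nat.sub_add_cancel hm,
    hmy, pow_zero, Equiv.Perm.one_apply]

lemma cyclicNext_cyclicPrev {n : ℕ} (h : 0 < n) (k : Fin n) :
    cyclicNext h (cyclicPrev h k) = k := by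
  ext
  simp only [cyclicNext, cyclicPrev, Nat.mod_add_mod]
  rw [show (k : ℕ) + (n - 1) + 1 = k + n by omega, Nat.add_mod_right, Nat.mod_eq_of_lt k.isLt]

lemma cyclicPrev_bijective {n : ℕ} (h : 0 < n) : Function.Bijective (cyclicPrev h) :=
  Finite.injective_iff_bijective.1 fun a b hab => by
    simpa only [cyclicNext_cyclicPrev] using congrArg (cyclicNext h) hab

lemma three_nsmul_sub_add_add_mem {G : Type*} [AddCommGroup G] {H : AddSubgroup G} {a b c : G}
    (hab : a - b ∈ H) (hac : a - c ∈ H) : 3 • a - (a + b + c) ∈ H := by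
  convert H.add_mem hab hac using 1
  abel

lemma restrictFlow_add_add_of_partition {Y : Type*} {t : Y → ℤ} {S0 S1 S2 : Set Y}
    (hsupp : ∀ x, t x ≠ 0 ↔ x ∈ S0 ∪ S1 ∪ S2)
    (h01 : Disjoint S0 S1) (h02 : Disjoint S0 S2) (h12 : Disjoint S1 S2) :
    restrictFlow t S0 + restrictFlow t S1 + restrictFlow t S2 = t := by
  ext x
  have hx := hsupp x
  clear hsupp
  by_cases h0 : x ∈ S0 <;> by_cases h1 : x ∈ S1 <;> by_cases h2 : x ∈ S2 <;>
    simp_all [restrictFlow, Set.disjoint_left]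

lemma natCard_subtype_and_eq_sum_toInt {Y : Type*} [Fintype Y] (P : Y → Prop) [DecidablePred P]
    (b : Y → Bool) :
    (Nat.card {y // P y ∧ b y = true} : ℤ) = ∑ y with P y, (b y).toInt := by
  rw [Nat.card_eq_fintype_card, Fintype.card_subtype, ← Finset.filter_filter, Finset.card_filter,
    Nat.cast_sum]
  exact Finset.sum_congr rfl fun y _ => by cases b y <;> rfl

lemma edgePattern_iff (x : Fin 4 → ZMod 3) :
    edgePattern x ↔ ∀ j : Fin 4, x (j + 1) - x j = 0 ∨ x (j + 1) - x j = 1 := by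
  unfold edgePattern
  revert x
  decide

namespace CombMap

variable (M : CombMap)

/-- Crossing the edge `x` of `Ĝ` counterclockwise around its primal or dual vertex leads from
the corner `pdcTail x` to the corner `pdcHead x` (the faces of `Ĝ` are the corners of `M`). -/
def pdcTail (x : M.D × Bool) : M.D := if x.2 then x.1 else M.σ⁻¹ x.1

def pdcHead (x : M.D × Bool) : M.D := if x.2 then M.facePerm x.1 else x.1

def cob {A : Type*} [AddCommGroup A] : (M.D → A) →+ (M.D × Bool → A) :=
  AddMonoidHom.mk' (fun c x => c (M.pdcHead x) - c (M.pdcTail x)) fun c c' => by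
    ext x; simp only [Pi.add_apply]; abel

def pdcDivergence : (M.D × Bool → ℤ) →+ (M.D → ℤ) × (M.D → ℤ) × (M.D → ℤ) :=
  AddMonoidHom.mk' (fun t =>
    (fun d0 => ∑ d with M.SameVertex d0 d, t (d, false),
      fun d0 => ∑ d with M.SameFace d0 d, t (d, true),
      fun d => t (d, false) + t (M.α d, false) + t (d, true) + t (M.α d, true))) fun t t' => by
    ext
    · simp [Finset.sum_add_distrib]
    · simp [Finset.sum_add_distrib]
    · simp only [Pi.add_apply, Prod.snd_add]
      abel

variable {M}

lemma facePerm_apply (d : M.D) : M.facePerm d = M.σ⁻¹ (M.α d) := rfl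

lemma α_eq_iff {d e : M.D} : M.α d = e ↔ d = M.α e :=
  ⟨fun h => h ▸ (M.α_invol d).symm, fun h => h ▸ M.α_invol e⟩

section cob

variable {A : Type*} [AddCommGroup A] (c : M.D → A) (d : M.D)

@[simp] lemma cob_false : M.cob c (d, false) = c d - c (M.σ⁻¹ d) := rfl

@[simp] lemma cob_true : M.cob c (d, true) = c (M.facePerm d) - c d := rfl

end cob

lemma intCast_cob {R : Type*} [Ring R] (c : M.D → ℤ) (x : M.D × Bool) :
    ((M.cob c x : ℤ) : R) = M.cob (fun d => (c d : R)) x :=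
  Int.cast_sub _ _

lemma pdcFaceFlow_eq_cob (d0 : M.D) : M.pdcFaceFlow d0 = M.cob (Pi.single d0 1) := by
  ext ⟨d, _ | _⟩
  · simp [pdcFaceFlow, Pi.single_apply, Equiv.symm_apply_eq]
  · simp [pdcFaceFlow, Pi.single_apply, facePerm_apply, Equiv.symm_apply_eq, α_eq_iff]
    ring

theorem pdcFacialSubgroup_eq_range_cob : M.pdcFacialSubgroup = (M.cob (A := ℤ)).range := by
  apply le_antisymm
  · rw [pdcFacialSubgroup, AddSubgroup.closure_le]
    rintro _ ⟨d0, rfl⟩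
    exact ⟨_, (pdcFaceFlow_eq_cob d0).symm⟩
  · rintro _ ⟨c, rfl⟩
    rw [← Finset.univ_sum_single c, map_sum]
    refine AddSubgroup.sum_mem _ fun d _ => ?_
    rw [← mul_one (c d), ← smul_eq_mul, Pi.single_smul, map_zsmul, ← pdcFaceFlow_eq_cob]
    exact AddSubgroup.zsmul_mem _ (AddSubgroup.subset_closure (Set.mem_range_self d)) _

lemma pdcEulerian_iff_mem_ker {t : M.D × Bool → ℤ} :
    M.PDCEulerian t ↔ t ∈ M.pdcDivergence.ker := by
  simp [PDCEulerian, pdcDivergence, funext_iff, Finset.sum_filter]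

theorem pdcDivergence_cob (c : M.D → ℤ) : M.pdcDivergence (M.cob c) = 0 := by
  ext d
  · simp only [pdcDivergence, AddMonoidHom.mk'_apply, cob_false, Finset.sum_sub_distrib,
      Equiv.Perm.sum_sameCycle_inv_apply, sub_self, Prod.fst_zero, Pi.zero_apply]
  · simp only [pdcDivergence, AddMonoidHom.mk'_apply, cob_true, Finset.sum_sub_distrib,
      Equiv.Perm.sum_sameCycle_apply, sub_self, Prod.snd_zero, Prod.fst_zero, Pi.zero_apply]
  · simp only [pdcDivergence, AddMonoidHom.mk'_apply, cob_false, cob_true, facePerm_apply,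
      M.α_invol, Prod.snd_zero, Pi.zero_apply]
    abel

theorem pdcFacialSubgroup_le_ker_pdcDivergence : M.pdcFacialSubgroup ≤ M.pdcDivergence.ker := by
  rw [pdcFacialSubgroup_eq_range_cob]
  rintro _ ⟨c, rfl⟩
  exact pdcDivergence_cob c

/-- Around the edge `{d, α d}`, the four steps of the EDGE pattern are the increments of the
labelling across the edges `(d, true)`, `(α d, false)`, `(α d, true)`, `(d, false)` of `Ĝ`. -/
theorem isSchnyderLabeling_iff_cob {lab : M.D → ZMod 3} :
    IsSchnyderLabeling M.σ M.α lab ↔ ∀ x, M.cob lab x = 0 ∨ M.cob lab x = 1 := by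
  have hedge : ∀ d, EdgeCond M.σ M.α lab d ↔
      (M.cob lab (d, true) = 0 ∨ M.cob lab (d, true) = 1) ∧
      (M.cob lab (M.α d, false) = 0 ∨ M.cob lab (M.α d, false) = 1) ∧
      (M.cob lab (M.α d, true) = 0 ∨ M.cob lab (M.α d, true) = 1) ∧
      (M.cob lab (d, false) = 0 ∨ M.cob lab (d, false) = 1) := fun d => by
    simp [EdgeCond, edgePattern_iff, Fin.forall_fin_succ, facePerm_apply, M.α_invol]
  simp only [IsSchnyderLabeling, hedge]
  refine ⟨fun h => ?_, fun h d => ⟨h _, h _, h _, h _⟩⟩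
  rintro ⟨d, _ | _⟩
  exacts [(h d).2.2.2, (h d).1]

lemma labOrientation_apply (lab : M.D → ZMod 3) (x : M.D × Bool) :
    M.labOrientation lab x = decide (M.cob lab x = 1) := by
  rcases x with ⟨d, _ | _⟩ <;> simp [labOrientation, sub_eq_iff_eq_add']

lemma intCast_toInt_labOrientation {lab : M.D → ZMod 3} {x : M.D × Bool}
    (h : M.cob lab x = 0 ∨ M.cob lab x = 1) :
    ((M.labOrientation lab x).toInt : ZMod 3) = M.cob lab x := by
  rcases h with h | h <;> simp [labOrientation_apply, h]

lemma pdcDiff_apply (o o' : M.D × Bool → Bool) (x : M.D × Bool) :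
    M.pdcDiff o o' x = (o x).toInt - (o' x).toInt := by
  unfold pdcDiff
  cases o x <;> cases o' x <;> rfl

lemma pdcDiff_eq_one_or_eq_zero_or_eq_neg_one (o o' : M.D × Bool → Bool) (x : M.D × Bool) :
    M.pdcDiff o o' x = 1 ∨ M.pdcDiff o o' x = 0 ∨ M.pdcDiff o o' x = -1 := by
  unfold pdcDiff
  cases o x <;> cases o' x <;> simp

variable (M) in
def IsCoboundaryModThree (t : M.D × Bool → ℤ) : Prop :=
  ∃ δ : M.D → ZMod 3, ∀ x, (t x : ZMod 3) = M.cob δ x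

lemma isCoboundaryModThree_of_mem_pdcFacialSubgroup {t : M.D × Bool → ℤ}
    (ht : t ∈ M.pdcFacialSubgroup) : M.IsCoboundaryModThree t := by
  obtain ⟨c, rfl⟩ := pdcFacialSubgroup_eq_range_cob (M := M) ▸ ht
  exact ⟨fun d => (c d : ZMod 3), intCast_cob c⟩

theorem isSchnyderOrientation_iff_isCoboundaryModThree {lab : M.D → ZMod 3}
    (hlab : IsSchnyderLabeling M.σ M.α lab) (o' : M.D × Bool → Bool) :
    M.IsSchnyderOrientation o' ↔
      M.IsCoboundaryModThree (M.pdcDiff (M.labOrientation lab) o') := by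
  have hstep := isSchnyderLabeling_iff_cob.1 hlab
  constructor
  · rintro ⟨lab', hlab', rfl⟩
    refine ⟨lab - lab', fun x => ?_⟩
    rw [pdcDiff_apply, Int.cast_sub, intCast_toInt_labOrientation (hstep x),
      intCast_toInt_labOrientation (isSchnyderLabeling_iff_cob.1 hlab' x), map_sub, Pi.sub_apply]
  · rintro ⟨δ, hδ⟩
    have hcob : ∀ x, M.cob (lab - δ) x = ((o' x).toInt : ZMod 3) := fun x => by
      rw [map_sub, Pi.sub_apply, ← hδ, pdcDiff_apply, Int.cast_sub,
        intCast_toInt_labOrientation (hstep x), sub_sub_cancel]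
    refine ⟨lab - δ, isSchnyderLabeling_iff_cob.2 fun x => ?_, funext fun x => ?_⟩
    · rw [hcob]
      cases o' x <;> simp
    · rw [labOrientation_apply, hcob]
      cases o' x <;> simp

section Partition

variable {t : M.D × Bool → ℤ}

lemma isCoboundaryModThree_of_pdcPartitionable (ht : M.PDCPartitionable t) :
    M.IsCoboundaryModThree t := by
  obtain ⟨S0, S1, S2, hsupp, h01, h02, h12, m01, m02, -⟩ := ht
  have hmem := three_nsmul_sub_add_add_mem m01 m02
  rw [restrictFlow_add_add_of_partition hsupp h01 h02 h12, pdcFacialSubgroup_eq_range_cob]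
    at hmem
  obtain ⟨c, hc⟩ := hmem
  refine ⟨-fun d => (c d : ZMod 3), fun x => ?_⟩
  have h3 : (3 : ZMod 3) = 0 := rfl
  rw [map_neg, Pi.neg_apply, ← intCast_cob, hc]
  simp [h3]

def colourClass (t : M.D × Bool → ℤ) (δ : M.D → ZMod 3) (i : ZMod 3) : Set (M.D × Bool) :=
  {x | t x ≠ 0 ∧ (if t x = 1 then δ (M.pdcTail x) else δ (M.pdcHead x)) = i}

theorem restrictFlow_colourClass_sub {δ : M.D → ZMod 3}
    (ht : ∀ x, t x = 1 ∨ t x = 0 ∨ t x = -1) (hδ : ∀ x, (t x : ZMod 3) = M.cob δ x)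
    (i : ZMod 3) :
    restrictFlow t (colourClass t δ i) - restrictFlow t (colourClass t δ (i + 1)) =
      M.cob fun d => if δ d = i + 1 then 1 else 0 := by
  have hstep : ∀ (u v : ZMod 3) (s : ℤ), s = 1 ∨ s = 0 ∨ s = -1 → (s : ZMod 3) = v - u →
      (if s ≠ 0 ∧ (if s = 1 then u else v) = i then s else 0) -
          (if s ≠ 0 ∧ (if s = 1 then u else v) = i + 1 then s else 0) =
        (if v = i + 1 then 1 else 0) - (if u = i + 1 then 1 else 0) := by
    rintro u v s (rfl | rfl | rfl) hsuv
    · obtain rfl : v = u + 1 := by push_cast at hsuv; linear_combination -hsuv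
      revert u i; decide
    · obtain rfl : v = u := by push_cast at hsuv; linear_combination -hsuv
      simp
    · obtain rfl : u = v + 1 := by push_cast at hsuv; linear_combination hsuv
      revert v i; decide
  ext x
  simp only [Pi.sub_apply, restrictFlow, colourClass, Set.mem_ofPred_eq]
  convert hstep _ _ (t x) (ht x) (hδ x) using 3
  rfl

theorem pdcPartitionable_of_isCoboundaryModThree (ht : ∀ x, t x = 1 ∨ t x = 0 ∨ t x = -1)
    (hδ : M.IsCoboundaryModThree t) : M.PDCPartitionable t := by
  obtain ⟨δ, hδ⟩ := hδ
  have hcob : ∀ i j, j = i + 1 →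
      restrictFlow t (colourClass t δ i) - restrictFlow t (colourClass t δ j)
        ∈ M.pdcFacialSubgroup := fun i j hij => by
    rw [hij, restrictFlow_colourClass_sub ht hδ, pdcFacialSubgroup_eq_range_cob]
    exact AddMonoidHom.mem_range.2 ⟨_, rfl⟩
  have hdisj : ∀ i j, i ≠ j → Disjoint (colourClass t δ i) (colourClass t δ j) :=
    fun i j hij => Set.disjoint_left.2 fun x hi hj => hij (hi.2.symm.trans hj.2)
  refine ⟨colourClass t δ 0, colourClass t δ 1, colourClass t δ 2, fun x => ?_,
    hdisj 0 1 (by decide), hdisj 0 2 (by decide), hdisj 1 2 (by decide),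
    hcob 0 1 rfl, ?_, hcob 1 2 rfl⟩
  · have hcolour : ∀ a : ZMod 3, a = 0 ∨ a = 1 ∨ a = 2 := by decide
    simp only [colourClass, Set.mem_union, Set.mem_ofPred_eq]
    have := hcolour (if t x = 1 then δ (M.pdcTail x) else δ (M.pdcHead x))
    tauto
  · simpa using M.pdcFacialSubgroup.add_mem (hcob 0 1 rfl) (hcob 1 2 rfl)

theorem pdcPartitionable_iff_isCoboundaryModThree (ht : ∀ x, t x = 1 ∨ t x = 0 ∨ t x = -1) :
    M.PDCPartitionable t ↔ M.IsCoboundaryModThree t :=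
  ⟨isCoboundaryModThree_of_pdcPartitionable, pdcPartitionable_of_isCoboundaryModThree ht⟩

theorem pdcEulerianPartitionable_iff :
    M.PDCEulerianPartitionable t ↔ M.PDCPartitionable t ∧ M.PDCEulerian t := by
  simp only [PDCEulerianPartitionable, PDCPartitionable, pdcEulerian_iff_mem_ker]
  constructor
  · rintro ⟨S0, S1, S2, hsupp, h01, h02, h12, m01, m02, m12, e0, e1, e2⟩
    refine ⟨⟨S0, S1, S2, hsupp, h01, h02, h12, m01, m02, m12⟩, ?_⟩
    rw [← restrictFlow_add_add_of_partition hsupp h01 h02 h12]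
    exact add_mem (add_mem e0 e1) e2
  · rintro ⟨⟨S0, S1, S2, hsupp, h01, h02, h12, m01, m02, m12⟩, ht⟩
    have hpart : ∀ {a b c : M.D × Bool → ℤ}, a + b + c = t → a - b ∈ M.pdcFacialSubgroup →
        a - c ∈ M.pdcFacialSubgroup → a ∈ M.pdcDivergence.ker := fun habc hab hac => by
      have h3 := M.pdcDivergence.ker.add_mem
        (pdcFacialSubgroup_le_ker_pdcDivergence (three_nsmul_sub_add_add_mem hab hac)) (habc ▸ ht)
      rw [sub_add_cancel] at h3
      exact (AddSubmonoid.ker_saturated _ h3).resolve_left three_ne_zero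
    have hsum := restrictFlow_add_add_of_partition hsupp h01 h02 h12
    refine ⟨S0, S1, S2, hsupp, h01, h02, h12, m01, m02, m12, hpart hsum m01 m02,
      hpart (by convert hsum using 1; abel) (sub_mem_comm_iff.1 m01) m12,
      hpart (by convert hsum using 1; abel) (sub_mem_comm_iff.1 m02) (sub_mem_comm_iff.1 m12)⟩

end Partition

theorem sameOutdegrees_iff_pdcEulerian (o o' : M.D × Bool → Bool) :
    M.SameOutdegrees o o' ↔ M.PDCEulerian (M.pdcDiff o o') := by
  have hedge : ∀ (o : M.D × Bool → Bool) d, (M.outdegEdge o d : ℤ) = 4 - ((o (d, false)).toInt +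
      (o (M.α d, false)).toInt + (o (d, true)).toInt + (o (M.α d, true)).toInt) := fun o d => by
    unfold outdegEdge
    cases o (d, false) <;> cases o (M.α d, false) <;> cases o (d, true) <;>
      cases o (M.α d, true) <;> rfl
  simp only [SameOutdegrees, PDCEulerian, pdcDiff_apply, ← Finset.sum_filter,
    Finset.sum_sub_distrib, ← Int.natCast_inj (m := M.outdegEdge _ _), hedge,
    outdegPrimal, outdegDual, natCard_subtype_and_eq_sum_toInt, sub_eq_zero, ← Int.natCast_inj]
  constructor <;> rintro ⟨h1, h2, h3⟩ <;> refine ⟨h1, h2, fun d => ?_⟩ <;> linarith [h3 d]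

variable (M) in
/-- `γ(C)` as a function of the orientation is the linear map `gammaHom C` applied to its
`0/1` out-edge indicator: the constants in the dual-edge terms of `gammaPDC` cancel. -/
def gammaHom (C : M.ClosedWalk) : (M.D × Bool → ℤ) →+ ℤ :=
  AddMonoidHom.mk' (fun t =>
    (∑ k : Fin C.n, ∑ d : M.D,
      ((if ccwSector M.σ (M.α (C.darts (cyclicPrev C.pos k))) (C.darts k) d then t (d, false)
          else 0) -
        (if ccwSector M.σ (C.darts k) (M.α (C.darts (cyclicPrev C.pos k))) d then t (d, false)
          else 0))) +
      ∑ k : Fin C.n, (t (C.darts k, true) - t (M.α (C.darts k), true))) fun t t' => by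
    simp only [Pi.add_apply, ite_add_zero, add_sub_add_comm, Finset.sum_add_distrib]
    abel

theorem gammaPDC_sub_gammaPDC (o o' : M.D × Bool → Bool) (C : M.ClosedWalk) :
    M.gammaPDC o C - M.gammaPDC o' C = M.gammaHom C (M.pdcDiff o o') := by
  have hγ : ∀ o : M.D × Bool → Bool, M.gammaPDC o C = M.gammaHom C fun x => (o x).toInt :=
    fun o => by
      unfold gammaPDC gammaHom
      congr 1
      · refine Finset.sum_congr rfl fun k _ => Finset.sum_congr rfl fun d _ => ?_
        split_ifs <;> cases o (d, false) <;> simp_all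
      · refine Finset.sum_congr rfl fun k _ => ?_
        dsimp only
        cases o (C.darts k, true) <;> cases o (M.α (C.darts k), true) <;> rfl
  rw [hγ, hγ, ← map_sub]
  congr 1
  ext x
  rw [pdcDiff_apply, Pi.sub_apply]

theorem gammaHom_cob (C : M.ClosedWalk) (c : M.D → ℤ) : M.gammaHom C (M.cob c) = 0 := by
  have hsector : ∀ k, ∑ d : M.D,
      ((if ccwSector M.σ (M.α (C.darts (cyclicPrev C.pos k))) (C.darts k) d then
          M.cob c (d, false) else 0) -
        (if ccwSector M.σ (C.darts k) (M.α (C.darts (cyclicPrev C.pos k))) d then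
          M.cob c (d, false) else 0)) =
      (c (M.σ⁻¹ (C.darts k)) - c (M.α (C.darts (cyclicPrev C.pos k)))) -
        (c (M.σ⁻¹ (M.α (C.darts (cyclicPrev C.pos k)))) - c (C.darts k)) := fun k => by
    have hxy : M.σ.SameCycle (M.α (C.darts (cyclicPrev C.pos k))) (C.darts k) := by
      simpa only [cyclicNext_cyclicPrev] using C.chain (cyclicPrev C.pos k)
    rw [Finset.sum_sub_distrib, ← Finset.sum_filter, ← Finset.sum_filter]
    simp only [cob_false]
    rw [sum_ccwSector_sub hxy, sum_ccwSector_sub hxy.symm]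
  let g : Fin C.n → ℤ := fun k => c (M.α (C.darts k)) + c (M.σ⁻¹ (M.α (C.darts k)))
  calc M.gammaHom C (M.cob c) = ∑ k, (g k - g (cyclicPrev C.pos k)) := by
        simp only [gammaHom, AddMonoidHom.mk'_apply, hsector, cob_true, facePerm_apply, M.α_invol,
          ← Finset.sum_add_distrib, g]
        exact Finset.sum_congr rfl fun k _ => by abel
    _ = 0 := by rw [Finset.sum_sub_distrib, (cyclicPrev_bijective C.pos).sum_comp g, sub_self]

theorem gammaHom_of_primal_eq_zero {t : M.D × Bool → ℤ} (h0 : ∀ d, t (d, false) = 0)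
    (hflow : IsFlow M.α fun d => t (d, true)) (C : M.ClosedWalk) :
    M.gammaHom C t = 2 * ∑ k, t (C.darts k, true) := by
  simp only [gammaHom, AddMonoidHom.mk'_apply, h0, ite_self, sub_self, Finset.sum_const_zero,
    zero_add, Finset.mul_sum, hflow _]
  exact Finset.sum_congr rfl fun k _ => by ring

theorem flow_dotProduct {τ : M.D → ℤ} (hτ : IsFlow M.α τ) (W : M.ClosedWalk) :
    W.flow ⬝ᵥ τ = 2 * ∑ k, τ (W.darts k) := by
  simp only [dotProduct, CWalk.flow, Finset.sum_mul, sub_mul, ite_mul, one_mul, zero_mul]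
  rw [Finset.sum_comm, Finset.mul_sum]
  refine Finset.sum_congr rfl fun k _ => ?_
  simp only [Finset.sum_sub_distrib, eq_comm (a := W.darts k), α_eq_iff, Finset.sum_ite_eq',
    Finset.mem_univ, if_true, hτ _]
  ring

theorem faceFlow_dotProduct {τ : M.D → ℤ} (hτ : IsFlow M.α τ) (d0 : M.D) :
    faceFlow M.σ M.α d0 ⬝ᵥ τ = 2 * ∑ d with M.SameFace d0 d, τ d := by
  have hα := Equiv.sum_comp M.α fun d => if M.SameFace d0 d then τ (M.α d) else 0
  simp only [M.α_invol, hτ _, ← Finset.sum_filter, Finset.sum_neg_distrib] at hα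
  simp only [dotProduct, faceFlow, sub_mul, ite_mul, one_mul, zero_mul, Finset.sum_sub_distrib,
    ← Finset.sum_filter]
  rw [show fperm M.σ M.α = M.facePerm from rfl, hα]
  ring

theorem dotProduct_eq_zero_of_mem_facialSubgroup {τ : M.D → ℤ} (hτ : IsFlow M.α τ)
    (hface : ∀ d0, ∑ d with M.SameFace d0 d, τ d = 0) {f : M.D → ℤ}
    (hf : f ∈ facialSubgroup M.σ M.α) : f ⬝ᵥ τ = 0 := by
  induction hf using AddSubgroup.closure_induction with
  | mem _ h =>
    obtain ⟨d0, rfl⟩ := h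
    rw [faceFlow_dotProduct hτ, hface, mul_zero]
  | zero => exact zero_dotProduct τ
  | add _ _ _ _ h h' => rw [add_dotProduct, h, h', add_zero]
  | neg _ _ h => rw [neg_dotProduct, h, neg_zero]

theorem sum_darts_eq_zero_of_isHomologyBasis {ι : Type*} [Fintype ι] {B : ι → M.ClosedWalk}
    (hB : IsHomologyBasis M.σ M.α B) {τ : M.D → ℤ} (hτ : IsFlow M.α τ)
    (hface : ∀ d0, ∑ d with M.SameFace d0 d, τ d = 0) (hBτ : ∀ i, ∑ k, τ ((B i).darts k) = 0)
    (W : M.ClosedWalk) : ∑ k, τ (W.darts k) = 0 := by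
  obtain ⟨μ, hμ⟩ := hB W
  have h := dotProduct_eq_zero_of_mem_facialSubgroup hτ hface hμ
  simp only [sub_dotProduct, sum_dotProduct, smul_dotProduct, flow_dotProduct hτ, hBτ, mul_zero,
    smul_zero, Finset.sum_const_zero, sub_zero] at h
  omega

variable (M) in
/-- `L` is the list of darts of a walk from the vertex of `a` to the vertex of `b`. -/
def IsWalk : M.D → List M.D → M.D → Prop
  | a, [], b => M.SameVertex a b
  | a, e :: L, b => M.SameVertex a e ∧ IsWalk (M.α e) L b

lemma IsWalk.of_sameVertex_left {a a' b : M.D} {L : List M.D} (h : M.SameVertex a a')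
    (hL : M.IsWalk a' L b) : M.IsWalk a L b := by
  cases L with
  | nil => exact h.trans hL
  | cons e L => exact ⟨h.trans hL.1, hL.2⟩

lemma IsWalk.append {a b c : M.D} {L L' : List M.D} (hL : M.IsWalk a L b)
    (hL' : M.IsWalk b L' c) : M.IsWalk a (L ++ L') c := by
  induction L generalizing a with
  | nil => exact hL'.of_sameVertex_left hL
  | cons e L ih => exact ⟨hL.1, ih hL.2⟩

lemma IsWalk.reverse {a b : M.D} {L : List M.D} (hL : M.IsWalk a L b) :
    M.IsWalk b (L.reverse.map M.α) a := by
  induction L generalizing a with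
  | nil => exact hL.symm
  | cons e L ih =>
    rw [List.reverse_cons, List.map_append]
    exact (ih hL.2).append ⟨.refl _ _, by rw [M.α_invol]; exact hL.1.symm⟩

lemma exists_isWalk (a b : M.D) : ∃ L, M.IsWalk a L b := by
  induction M.connected a b with
  | rel a b h =>
    rcases h with rfl | rfl
    exacts [⟨[], 1, by simp⟩, ⟨[a], .refl _ _, .refl _ _⟩]
  | refl a => exact ⟨[], .refl _ _⟩
  | symm a b _ ih => obtain ⟨L, hL⟩ := ih; exact ⟨_, hL.reverse⟩
  | trans a b c _ _ ih ih' =>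
    obtain ⟨L, hL⟩ := ih
    obtain ⟨L', hL'⟩ := ih'
    exact ⟨_, hL.append hL'⟩

lemma IsWalk.sameVertex_head {a b : M.D} {L : List M.D} (hL : M.IsWalk a L b) :
    M.SameVertex a (L ++ [b])[0] := by
  cases L with
  | nil => exact hL
  | cons e L => exact hL.1

lemma IsWalk.sameVertex_getElem {a b : M.D} {L : List M.D} (hL : M.IsWalk a L b) (i : ℕ)
    (hi : i < L.length) : M.SameVertex (M.α L[i]) ((L ++ [b])[i + 1]'(by simpa using hi)) := by
  induction L generalizing a i with
  | nil => simp at hi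
  | cons e L ih =>
    cases i with
    | zero => exact hL.2.sameVertex_head
    | succ i => exact ih hL.2 i (by simpa using hi)

lemma IsWalk.sum_map_eq_zero {τ : M.D → ℤ} (hτ : ∀ W : M.ClosedWalk, ∑ k, τ (W.darts k) = 0)
    {a : M.D} {L : List M.D} (hL : M.IsWalk a L a) : (L.map τ).sum = 0 := by
  by_cases hnil : L = []
  · simp [hnil]
  have hpos : 0 < L.length := List.length_pos_iff.2 hnil
  let W : M.ClosedWalk :=
    { n := L.length, pos := hpos, darts := fun k => L[k], chain := fun k => by
        by_cases hk : (k : ℕ) + 1 < L.length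
        · have := hL.sameVertex_getElem k k.isLt
          simp only [List.getElem_append_left hk] at this
          simpa [cyclicNext, Nat.mod_eq_of_lt hk] using this
        · have hk' : (k : ℕ) + 1 = L.length := by omega
          have hlast := hL.sameVertex_getElem k k.isLt
          have hfirst := hL.sameVertex_head
          rw [List.getElem_concat_length hk'] at hlast
          rw [List.getElem_append_left hpos] at hfirst
          simpa [cyclicNext, hk'] using hlast.trans hfirst }
  rw [← List.ofFn_getElem_eq_map, List.sum_ofFn]
  exact hτ W

theorem exists_vertex_potential {τ : M.D → ℤ} (hτ : IsFlow M.α τ)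
    (hW : ∀ W : M.ClosedWalk, ∑ k, τ (W.darts k) = 0) :
    ∃ u : M.D → ℤ, (∀ d, u (M.σ d) = u d) ∧ ∀ d, u (M.α d) = u d + τ d := by
  rcases isEmpty_or_nonempty M.D with hD | ⟨⟨d₀⟩⟩
  · exact ⟨0, hD.elim, hD.elim⟩
  choose L hL using exists_isWalk d₀
  have hrev : ∀ l : List M.D, ((l.reverse.map M.α).map τ).sum = -(l.map τ).sum := fun l => by
    rw [List.map_map, List.map_reverse, List.sum_reverse]
    induction l with
    | nil => rfl
    | cons e l ih => simp only [List.map_cons, List.sum_cons, Function.comp_apply, hτ e, ih]; ring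
  have hsum : ∀ {d L'}, M.IsWalk d₀ L' d → (L'.map τ).sum = ((L d).map τ).sum := fun hL' => by
    have := (hL'.append (hL _).reverse).sum_map_eq_zero hW
    rw [List.map_append, List.sum_append, hrev] at this
    linarith
  refine ⟨fun d => ((L d).map τ).sum, fun d => ?_, fun d => ?_⟩
  · exact (hsum ((hL d).append (show M.IsWalk d [] (M.σ d) from ⟨1, by simp⟩))).symm.trans
      (by simp)
  · show ((L (M.α d)).map τ).sum = ((L d).map τ).sum + τ d
    rw [← hsum ((hL d).append (show M.IsWalk d [d] (M.α d) from ⟨.refl _ _, .refl _ _⟩))]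
    simp

section Homology

variable {t : M.D × Bool → ℤ}

theorem exists_primal_potential (ht : M.PDCEulerian t) :
    ∃ s : M.D → ℤ, ∀ d, M.cob s (d, false) = t (d, false) :=
  M.σ.exists_sub_inv_eq_of_sum_sameCycle_eq_zero (fun d => t (d, false)) fun d0 => by
    simpa only [Finset.sum_filter] using ht.1 d0

theorem mem_pdcFacialSubgroup_of_pdcEulerian {ι : Type*} [Fintype ι] {B : ι → M.ClosedWalk}
    (hB : IsHomologyBasis M.σ M.α B) (ht : M.PDCEulerian t)
    (hγ : ∀ i, M.gammaHom (B i) t = 0) : t ∈ M.pdcFacialSubgroup := by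
  obtain ⟨s, hs⟩ := exists_primal_potential ht
  set t' := t - M.cob s with ht'_def
  have ht' : M.PDCEulerian t' :=
    pdcEulerian_iff_mem_ker.2 (sub_mem (pdcEulerian_iff_mem_ker.1 ht) (pdcDivergence_cob s))
  have h0 : ∀ d, t' (d, false) = 0 := fun d => by simp [t', ← hs]
  have hτ : IsFlow M.α fun d => t' (d, true) := fun d => by
    have := ht'.2.2 d
    rw [h0, h0] at this
    linarith
  have hface : ∀ d0, ∑ d with M.SameFace d0 d, t' (d, true) = 0 := fun d0 => by
    simpa only [Finset.sum_filter] using ht'.2.1 d0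
  have hBτ : ∀ i, ∑ k, t' ((B i).darts k, true) = 0 := fun i => by
    have hγ' : M.gammaHom (B i) t' = 0 := by rw [ht'_def, map_sub, hγ i, gammaHom_cob, sub_zero]
    rw [gammaHom_of_primal_eq_zero h0 hτ] at hγ'
    omega
  obtain ⟨u, hσu, hαu⟩ :=
    exists_vertex_potential hτ (sum_darts_eq_zero_of_isHomologyBasis hB hτ hface hBτ)
  have hu : t' = M.cob u := by
    ext ⟨d, _ | _⟩
    · have hσd := hσu (M.σ⁻¹ d)
      rw [← Equiv.Perm.mul_apply, mul_inv_cancel, Equiv.Perm.one_apply] at hσd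
      rw [h0, cob_false, hσd, sub_self]
    · have hσαd := hσu (M.σ⁻¹ (M.α d))
      rw [← Equiv.Perm.mul_apply, mul_inv_cancel, Equiv.Perm.one_apply] at hσαd
      rw [cob_true, facePerm_apply, ← hσαd, hαu, add_sub_cancel_left]
  rw [pdcFacialSubgroup_eq_range_cob]
  exact ⟨s + u, by rw [map_add, ← hu, ht'_def, add_sub_cancel]⟩

theorem mem_pdcFacialSubgroup_iff {ι : Type*} [Fintype ι] {B : ι → M.ClosedWalk}
    (hB : IsHomologyBasis M.σ M.α B) :
    t ∈ M.pdcFacialSubgroup ↔ M.PDCEulerian t ∧ ∀ i, M.gammaHom (B i) t = 0 := by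
  refine ⟨fun ht => ?_, fun h => mem_pdcFacialSubgroup_of_pdcEulerian hB h.1 h.2⟩
  refine ⟨pdcEulerian_iff_mem_ker.2 (pdcFacialSubgroup_le_ker_pdcDivergence ht), fun i => ?_⟩
  obtain ⟨c, rfl⟩ := pdcFacialSubgroup_eq_range_cob (M := M) ▸ ht
  exact gammaHom_cob (B i) c

end Homology

end CombMap

theorem schnyder_orientation_transformations_general
    (M : CombMap) (g : ℕ)
    (B : Fin (2 * g) → M.ClosedWalk)
    (hB : IsHomologyBasis M.σ M.α B)
    (o o' : M.D × Bool → Bool) (hD : M.IsSchnyderOrientation o) :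
    (M.IsSchnyderOrientation o' ↔ M.PDCPartitionable (M.pdcDiff o o')) ∧
    ((M.IsSchnyderOrientation o' ∧ M.SameOutdegrees o o') ↔
        M.PDCEulerianPartitionable (M.pdcDiff o o')) ∧
    ((M.IsSchnyderOrientation o' ∧ M.SameOutdegrees o o' ∧
        ∀ i, M.gammaPDC o (B i) = M.gammaPDC o' (B i)) ↔
      M.pdcDiff o o' ∈ M.pdcFacialSubgroup) := by
  obtain ⟨lab, hlab, rfl⟩ := hD
  have hSchnyder := CombMap.isSchnyderOrientation_iff_isCoboundaryModThree hlab o'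
  have hPartition := hSchnyder.trans
    (CombMap.pdcPartitionable_iff_isCoboundaryModThree
      (CombMap.pdcDiff_eq_one_or_eq_zero_or_eq_neg_one _ o')).symm
  have hγ : ∀ i, M.gammaPDC (M.labOrientation lab) (B i) = M.gammaPDC o' (B i) ↔
      M.gammaHom (B i) (M.pdcDiff (M.labOrientation lab) o') = 0 := fun i => by
    rw [← CombMap.gammaPDC_sub_gammaPDC, sub_eq_zero]
  refine ⟨hPartition, ?_, ?_⟩
  · rw [CombMap.sameOutdegrees_iff_pdcEulerian, CombMap.pdcEulerianPartitionable_iff, hPartition]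
  · simp only [CombMap.sameOutdegrees_iff_pdcEulerian, hγ, CombMap.mem_pdcFacialSubgroup_iff hB]
    refine ⟨fun h => h.2, fun h => ⟨hSchnyder.2 ?_, h⟩⟩
    exact CombMap.isCoboundaryModThree_of_mem_pdcFacialSubgroup
      ((CombMap.mem_pdcFacialSubgroup_iff hB).2 h)

/-- Let `D, D'` be orientations of `Ĝ` with `D` a Schnyder
orientation and `T = D \ D'`.  Then: (1) `D'` is a Schnyder orientation iff `T`
is partitionable; (2) `D'` is a Schnyder orientation with the same outdegrees
as `D` iff `T` is Eulerian-partitionable; (3) `D'` is a Schnyder orientation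
with the same outdegrees and the same type as `D` iff `T` is `0`-homologous
(i.e. `D` and `D'` are homologous). -/
theorem schnyder_orientation_transformations
    (M : CombMap) (g : ℕ) (hgenus : M.eulerChar = 2 - 2 * (g : ℤ))
    (hloop : M.NoContractibleLoop) (hmulti : M.NoHomotopicMultiEdges)
    (B : Fin (2 * g) → M.ClosedWalk) (hBc : ∀ i, (B i).IsCycle)
    (hB : IsHomologyBasis M.σ M.α B)
    (o o' : M.D × Bool → Bool) (hD : M.IsSchnyderOrientation o) :
    (M.IsSchnyderOrientation o' ↔ M.PDCPartitionable (M.pdcDiff o o')) ∧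
    ((M.IsSchnyderOrientation o' ∧ M.SameOutdegrees o o') ↔
        M.PDCEulerianPartitionable (M.pdcDiff o o')) ∧
    ((M.IsSchnyderOrientation o' ∧ M.SameOutdegrees o o' ∧
        ∀ i, M.gammaPDC o (B i) = M.gammaPDC o' (B i)) ↔
      M.pdcDiff o o' ∈ M.pdcFacialSubgroup) :=
  schnyder_orientation_transformations_general M g B hB o o' hD

end Schnyder
end
end

section
/- Let G be a map on an orientable surface (loops and multiple edges allowed), D0 an orientation of G, and f0 a face of G. Then the set O(G,D0) of all orientations of G homologous to D0, ordered by D ≤_{f0} D' if and only if D\D' is counterclockwise with respect to f0, is a distributive lattice. -/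
/-
Common combinatorial framework.

Maps on compact orientable surfaces are formalized as rotation systems
(combinatorial maps): a finite set of darts together with a permutation `σ`
(counterclockwise successor around each vertex) and a fixed-point-free
involution `α` (reversal of darts).  Vertices are the orbits of `σ`, edges the
orbits of `α`, and the (counterclockwise) facial walks are the orbits of
`σ⁻¹ * α`.  The genus is recovered from the Euler characteristic.

Homology of the map is formalized by flows: integer-valued functions on darts;
the subgroup generated by the facial flows plays the role of the boundary
subgroup, two flows being homologous when their difference belongs to it.
Contractibility is formalized combinatorially: null-homotopy of closed walks is
generated by insertion/deletion of spurs and of facial boundaries (and rotation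
of the base point).

Schnyder woods are formalized by their angle labellings (corners ≃ darts, the
corner of dart `d` being the corner between `d` and `σ d` at the tail of `d`);
this follows the paper, where (generalized) Schnyder woods are exactly the
EDGE, ℕ*-VERTEX, ℕ*-FACE angle labellings, and where around an edge `{d, α d}`
the four corners in clockwise order are `d, σ⁻¹ (α d), α d, σ⁻¹ d`.
-/

noncomputable section
open scoped Classical

namespace Schnyder

/-! An orientation `D` homologous to `D0` is determined by an integer potential `φ` on the faces,
normalized by `φ f0 = 0`, whose dual coboundary `e ↦ φ e - φ (α e)` is the flow of `D \ D0`.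
A nonnegative combination of facial walks avoiding `f0` is exactly the coboundary of a
nonnegative normalized potential, so `D ≤ D'` becomes `φ' ≤ φ` pointwise.  The potentials
arising from orientations are the solutions of the difference constraints
`0 ≤ [e ∈ D0] + φ e - φ (α e) ≤ 1`, which are preserved by pointwise `max` and `min`; hence
`O(G,D0)` is order-dual to a sublattice of `D → ℤ`, and is a distributive lattice. -/

namespace CombMap

variable (M : CombMap)

/-- Functions on the faces, seen as functions on darts. -/
def facePotentials : AddSubgroup (M.D → ℤ) where
  carrier := {φ | ∀ d d', M.SameFace d d' → φ d = φ d'}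
  add_mem' hφ hψ d d' h := by simp [hφ d d' h, hψ d d' h]
  zero_mem' _ _ _ := rfl
  neg_mem' hφ d d' h := by simp [hφ d d' h]

/-- On `facePotentials` this is the coboundary map of the dual graph: the dart `e` separates
the face on its left from the face on the left of `α e`. -/
def coboundary : (M.D → ℤ) →+ (M.D → ℤ) where
  toFun φ e := φ e - φ (M.α e)
  map_zero' := rfl
  map_add' φ ψ := by ext; simp only [Pi.add_apply]; ring

@[simp]
lemma coboundary_apply (φ : M.D → ℤ) (e : M.D) : M.coboundary φ e = φ e - φ (M.α e) := rfl

lemma coboundary_apply_alpha (φ : M.D → ℤ) (e : M.D) :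
    M.coboundary φ (M.α e) = -M.coboundary φ e := by
  simp [M.α_invol]

lemma const_mem_facePotentials (c : ℤ) : (fun _ => c) ∈ M.facePotentials := fun _ _ _ => rfl

lemma coboundary_const (c : ℤ) : M.coboundary (fun _ => c) = 0 := by
  ext; simp

def faceIndicator (d : M.D) : M.D → ℤ := fun e => if M.SameFace d e then 1 else 0

lemma faceIndicator_mem_facePotentials (d : M.D) : M.faceIndicator d ∈ M.facePotentials :=
  fun e e' h => by
    have : M.SameFace d e ↔ M.SameFace d e' := ⟨fun h' => h'.trans h, fun h' => h'.trans h.symm⟩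
    simp only [faceIndicator, this]

lemma faceFlow_eq_coboundary_faceIndicator (d : M.D) :
    faceFlow M.σ M.α d = M.coboundary (M.faceIndicator d) := by
  ext e
  simp only [faceFlow, faceIndicator, coboundary_apply, SameFace, facePerm]
  -- the two sides carry different `Decidable` instances for `SameCycle`
  congr

lemma sum_smul_faceFlow (c : M.D → ℤ) :
    ∑ d, c d • faceFlow M.σ M.α d = M.coboundary (∑ d, c d • M.faceIndicator d) := by
  simp only [faceFlow_eq_coboundary_faceIndicator, map_sum, map_zsmul]

def faceRep (d : M.D) : M.D := (Quotient.mk (permSetoid M.facePerm) d).out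

lemma sameFace_faceRep (d : M.D) : M.SameFace (M.faceRep d) d :=
  Quotient.mk_out (s := permSetoid M.facePerm) d

lemma faceRep_eq_of_sameFace {d d' : M.D} (h : M.SameFace d d') : M.faceRep d = M.faceRep d' :=
  congrArg Quotient.out (Quotient.sound (s := permSetoid M.facePerm) h)

lemma sum_faceRep_smul_faceIndicator {φ : M.D → ℤ} (hφ : φ ∈ M.facePotentials) :
    ∑ d, (if M.faceRep d = d then φ d else 0) • M.faceIndicator d = φ := by
  ext e
  rw [Finset.sum_apply, Finset.sum_eq_single (M.faceRep e)]
  · have hrep := M.sameFace_faceRep e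
    simp [faceIndicator, M.faceRep_eq_of_sameFace hrep, hrep, hφ _ _ hrep]
  · intro d _ hd
    by_cases hde : M.SameFace d e
    · have hrep : M.faceRep d ≠ d := fun h => hd (h ▸ M.faceRep_eq_of_sameFace hde)
      simp [hrep]
    · simp [faceIndicator, hde]
  · simp

lemma facialSubgroup_eq_map_coboundary :
    facialSubgroup M.σ M.α = M.facePotentials.map M.coboundary := by
  apply le_antisymm
  · rw [facialSubgroup, AddSubgroup.closure_le]
    rintro _ ⟨d, rfl⟩
    exact ⟨_, M.faceIndicator_mem_facePotentials d, (M.faceFlow_eq_coboundary_faceIndicator d).symm⟩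
  · rintro _ ⟨φ, hφ, rfl⟩
    rw [← M.sum_faceRep_smul_faceIndicator hφ, ← sum_smul_faceFlow]
    exact sum_mem fun d _ => zsmul_mem (AddSubgroup.subset_closure (Set.mem_range_self d)) _

/-- A potential with zero coboundary is invariant under `σ` and `α`, hence constant since the
map is connected. -/
lemma eq_of_coboundary_eq_zero {φ : M.D → ℤ} (hφ : φ ∈ M.facePotentials)
    (h : M.coboundary φ = 0) (a b : M.D) : φ a = φ b := by
  have hα (e : M.D) : φ (M.α e) = φ e := by
    have := congrFun h e
    simp only [coboundary_apply, Pi.zero_apply] at this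
    omega
  have hσ (e : M.D) : φ (M.σ e) = φ e := by
    have hface : M.SameFace (M.α (M.σ e)) e := by
      have : M.facePerm (M.α (M.σ e)) = e := by simp [facePerm, fperm, M.α_invol]
      show M.facePerm.SameCycle _ _
      rw [← Equiv.Perm.sameCycle_apply_left, this]
    rw [← hα, hφ _ _ hface]
  induction M.connected a b with
  | rel a b hab => rcases hab with rfl | rfl <;> simp [hσ, hα]
  | refl => rfl
  | symm _ _ _ ih => exact ih.symm
  | trans _ _ _ _ _ ih₁ ih₂ => exact ih₁.trans ih₂

lemma eq_of_coboundary_eq {φ ψ : M.D → ℤ} (hφ : φ ∈ M.facePotentials)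
    (hψ : ψ ∈ M.facePotentials) (h : M.coboundary φ = M.coboundary ψ) {f0 : M.D}
    (h0 : φ f0 = ψ f0) : φ = ψ := by
  ext e
  have := M.eq_of_coboundary_eq_zero (sub_mem hφ hψ) (by rw [map_sub, h, sub_self]) e f0
  simp only [Pi.sub_apply] at this
  omega

lemma exists_normalized_potential {t : M.D → ℤ} (ht : t ∈ facialSubgroup M.σ M.α)
    (f0 : M.D) : ∃ φ ∈ M.facePotentials, φ f0 = 0 ∧ M.coboundary φ = t := by
  rw [facialSubgroup_eq_map_coboundary] at ht
  obtain ⟨φ, hφ, rfl⟩ := ht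
  refine ⟨φ - fun _ => φ f0, sub_mem hφ (M.const_mem_facePotentials _), sub_self _, ?_⟩
  rw [map_sub, coboundary_const, sub_zero]

lemma ccwFlow_coboundary_iff {φ : M.D → ℤ} (hφ : φ ∈ M.facePotentials) {f0 : M.D}
    (h0 : φ f0 = 0) : M.CCWFlow f0 (M.coboundary φ) ↔ 0 ≤ φ := by
  constructor
  · rintro ⟨c, hc0, hc⟩
    set ψ := ∑ d, (c d : ℤ) • M.faceIndicator d with hψ_def
    have hψ : ψ ∈ M.facePotentials :=
      sum_mem fun d _ => zsmul_mem (M.faceIndicator_mem_facePotentials d) _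
    have hψ0 : ψ f0 = 0 := by
      rw [hψ_def, Finset.sum_apply]
      refine Finset.sum_eq_zero fun d _ => ?_
      by_cases hd : M.SameFace d f0 <;> simp [faceIndicator, hd, hc0]
    rw [M.eq_of_coboundary_eq hφ hψ (hc.trans (M.sum_smul_faceFlow _)) (h0.trans hψ0.symm)]
    intro e
    rw [hψ_def, Finset.sum_apply]
    exact Finset.sum_nonneg fun d _ => by
      simp only [Pi.smul_apply, faceIndicator]
      split_ifs <;> simp
  · intro hpos
    refine ⟨fun d => if M.faceRep d = d then (φ d).toNat else 0, fun d hd => ?_, ?_⟩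
    · simp only [hφ d f0 hd, h0, Int.toNat_zero, ite_self]
    · rw [sum_smul_faceFlow]
      conv_lhs => rw [← M.sum_faceRep_smul_faceIndicator hφ]
      refine congrArg _ (Finset.sum_congr rfl fun d _ => ?_)
      by_cases h : M.faceRep d = d <;> simp [h, Int.toNat_of_nonneg (hpos d)]

abbrev HomologousOrientations (D0 : Set M.D) : Type :=
  {A : Set M.D // M.IsOrientation A ∧ M.orientDiffFlow A D0 ∈ facialSubgroup M.σ M.α}

lemma orientDiffFlow_eq_sub (A B : Set M.D) :
    M.orientDiffFlow A B = A.indicator 1 - B.indicator 1 := by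
  ext e
  by_cases hA : e ∈ A <;> by_cases hB : e ∈ B <;> simp [orientDiffFlow, hA, hB]

lemma IsOrientation.indicator_alpha {M : CombMap} {A : Set M.D} (hA : M.IsOrientation A)
    (e : M.D) : A.indicator (1 : M.D → ℤ) (M.α e) = 1 - A.indicator 1 e := by
  have := hA e
  by_cases h : e ∈ A <;> simp_all

variable {M} (D0 : Set M.D) (f0 : M.D)

def homologousPotentials : Sublattice (M.D → ℤ) where
  carrier := {φ | φ ∈ M.facePotentials ∧ φ f0 = 0 ∧
    ∀ e, 0 ≤ D0.indicator 1 e + M.coboundary φ e ∧ D0.indicator 1 e + M.coboundary φ e ≤ 1}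
  supClosed' := by
    rintro φ ⟨hφ, hφ0, hφD⟩ ψ ⟨hψ, hψ0, hψD⟩
    refine ⟨fun d d' h => by simp [hφ d d' h, hψ d d' h], by simp [hφ0, hψ0], fun e => ?_⟩
    have := hφD e
    have := hψD e
    simp only [coboundary_apply, Pi.sup_apply] at *
    omega
  infClosed' := by
    rintro φ ⟨hφ, hφ0, hφD⟩ ψ ⟨hψ, hψ0, hψD⟩
    refine ⟨fun d d' h => by simp [hφ d d' h, hψ d d' h], by simp [hφ0, hψ0], fun e => ?_⟩
    have := hφD e
    have := hψD e
    simp only [coboundary_apply, Pi.inf_apply] at *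
    omega

def orientationOfPotential (φ : M.D → ℤ) : Set M.D :=
  {e | D0.indicator 1 e + M.coboundary φ e = 1}

variable {D0 f0}

lemma indicator_orientationOfPotential {φ : M.D → ℤ} (hφ : φ ∈ homologousPotentials D0 f0) :
    (orientationOfPotential D0 φ).indicator 1 = D0.indicator 1 + M.coboundary φ := by
  ext e
  have := hφ.2.2 e
  simp only [orientationOfPotential, Set.indicator_apply, Set.mem_ofPred_eq, Pi.add_apply,
    Pi.one_apply, coboundary_apply] at this ⊢
  split_ifs at this ⊢ <;> omega

lemma isOrientation_orientationOfPotential (hD0 : M.IsOrientation D0) {φ : M.D → ℤ}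
    (hφ : φ ∈ homologousPotentials D0 f0) : M.IsOrientation (orientationOfPotential D0 φ) := by
  intro e
  have := hφ.2.2 e
  simp only [orientationOfPotential, Set.mem_ofPred_eq, hD0.indicator_alpha,
    coboundary_apply_alpha]
  omega

def toHomologousOrientation (hD0 : M.IsOrientation D0) (φ : homologousPotentials D0 f0) :
    M.HomologousOrientations D0 :=
  ⟨orientationOfPotential D0 φ, isOrientation_orientationOfPotential hD0 φ.2, by
    rw [orientDiffFlow_eq_sub, indicator_orientationOfPotential φ.2, add_sub_cancel_left,
      facialSubgroup_eq_map_coboundary]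
    exact ⟨φ, φ.2.1, rfl⟩⟩

lemma orientDiffFlow_toHomologousOrientation (hD0 : M.IsOrientation D0)
    (φ ψ : homologousPotentials D0 f0) :
    M.orientDiffFlow (toHomologousOrientation hD0 φ).1 (toHomologousOrientation hD0 ψ).1 =
      M.coboundary (φ - ψ) := by
  simp only [toHomologousOrientation, orientDiffFlow_eq_sub, indicator_orientationOfPotential φ.2,
    indicator_orientationOfPotential ψ.2, map_sub]
  abel

lemma toHomologousOrientation_bijective (hD0 : M.IsOrientation D0) :
    Function.Bijective (toHomologousOrientation (f0 := f0) hD0) := by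
  constructor
  · intro φ ψ h
    have hδ : M.coboundary (φ - ψ) = 0 := by
      rw [← orientDiffFlow_toHomologousOrientation hD0, h, orientDiffFlow_eq_sub, sub_self]
    rw [map_sub, sub_eq_zero] at hδ
    exact Subtype.ext (M.eq_of_coboundary_eq φ.2.1 ψ.2.1 hδ (φ.2.2.1.trans ψ.2.2.1.symm))
  · rintro ⟨A, hA, hAD0⟩
    obtain ⟨φ, hφ, hφ0, hδ⟩ := M.exists_normalized_potential hAD0 f0
    have hAφ : A.indicator 1 = D0.indicator 1 + M.coboundary φ := by
      rw [hδ, orientDiffFlow_eq_sub, add_sub_cancel]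
    have hφD : φ ∈ homologousPotentials D0 f0 := ⟨hφ, hφ0, fun e => by
      rw [← Pi.add_apply, ← hAφ]
      by_cases h : e ∈ A <;> simp [h]⟩
    refine ⟨⟨φ, hφD⟩, Subtype.ext (Set.ext fun e => ?_)⟩
    simp only [toHomologousOrientation, orientationOfPotential, Set.mem_ofPred_eq, ← Pi.add_apply,
      ← hAφ]
    by_cases h : e ∈ A <;> simp [h]

lemma ccwFlow_orientDiffFlow_toHomologousOrientation_iff (hD0 : M.IsOrientation D0)
    (φ ψ : homologousPotentials D0 f0) :
    M.CCWFlow f0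
        (M.orientDiffFlow (toHomologousOrientation hD0 φ).1 (toHomologousOrientation hD0 ψ).1) ↔
      ψ ≤ φ := by
  rw [orientDiffFlow_toHomologousOrientation,
    M.ccwFlow_coboundary_iff (sub_mem φ.2.1 ψ.2.1) (by simp [φ.2.2.1, ψ.2.2.1]), sub_nonneg]
  rfl

end CombMap

/-- Let `G` be a map on an orientable surface (loops and
multiple edges allowed), `D0` an orientation of `G` and `f0` a face of `G`.
Then the set `O(G,D0)` of orientations of `G` homologous to `D0`, ordered by
`D ≤_{f0} D'` iff `D \ D'` is counterclockwise with respect to `f0`, is a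
distributive lattice. -/
theorem homologous_orientations_distributive_lattice
    (M : CombMap) (D0 : Set M.D) (hD0 : M.IsOrientation D0) (f0 : M.D) :
    ∃ inst : DistribLattice
        {A : Set M.D // M.IsOrientation A ∧ M.orientDiffFlow A D0 ∈ facialSubgroup M.σ M.α},
      ∀ X Y, distribLE inst X Y ↔ M.CCWFlow f0 (M.orientDiffFlow X.1 Y.1) := by
  have hbij := CombMap.toHomologousOrientation_bijective (f0 := f0) hD0
  let e : M.HomologousOrientations D0 ≃ (CombMap.homologousPotentials D0 f0)ᵒᵈ :=
    (Equiv.ofBijective _ hbij).symm.trans OrderDual.toDual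
  refine ⟨e.distribLattice, fun X Y => ?_⟩
  obtain ⟨φ, rfl⟩ := hbij.2 X
  obtain ⟨ψ, rfl⟩ := hbij.2 Y
  rw [CombMap.ccwFlow_orientDiffFlow_toHomologousOrientation_iff]
  show e _ ≤ e _ ↔ _
  simp [e, Equiv.ofBijective_symm_apply_apply]

end Schnyder
end
end
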